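/- arXiv:0903.2906 — 4 statements merged into one kernel-verified Lean document; each statement's English description precedes it below -/
import Mathlib

section
/- Let T be a finite tree rooted at ρ with k subtrees T_1,...,T_k attached to the root. Then the cut-width of T satisfies E(T) ≤ max over i of (E(T_i) + k + 1 - i), where the subtrees may be reordered arbitrarily (i.e., for any permutation of the subtrees this bound holds with the corresponding ordering). -/
open scoped Classical

/-!
Lay out the root first and then the subtrees one after another, each in an optimal order of its
own. A cut inside the block of `T_i` is crossed by at most `cutWidth T_i` edges of `T_i` and by
the edges from the root to `T_i, …, T_{k-1}`, at most one per subtree; no other edge spans it.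
-/

/-- The cut-width of a finite simple graph: the minimum over vertex orderings of the
maximum number of edges crossing any prefix/suffix cut. -/
noncomputable def cutWidth {V : Type*} [Fintype V] (G : SimpleGraph V) : ℕ :=
  ⨅ π : Fin (Fintype.card V) ≃ V,
    (Finset.range (Fintype.card V)).sup fun i =>
      (Finset.univ.filter fun p : V × V =>
        G.Adj p.1 p.2 ∧ (π.symm p.1 : ℕ) ≤ i ∧ i < (π.symm p.2 : ℕ)).card

open Finset Function

section Placement

variable {V α : Type*} [LinearOrder α]

noncomputable def cutEdges [Fintype V] (G : SimpleGraph V) (f : V → α) (t : α) :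
    Finset (V × V) :=
  {p : V × V | G.Adj p.1 p.2 ∧ f p.1 ≤ t ∧ t < f p.2}

theorem cutWidth_le_of_injective [Fintype V] (G : SimpleGraph V) {f : V → α} (hf : Injective f)
    {b : ℕ} (hb : ∀ t, #(cutEdges G f t) ≤ b) : cutWidth G ≤ b := by
  let _ : LinearOrder V := LinearOrder.lift' f hf
  let σ : Fin (Fintype.card V) ≃o V := Fintype.orderIsoFinOfCardEq V rfl
  refine (ciInf_le (OrderBot.bddBelow _) σ.toEquiv).trans (Finset.sup_le fun i hi => ?_)
  let j : Fin (Fintype.card V) := ⟨i, mem_range.mp hi⟩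
  have hle (v : V) : (σ.symm v : ℕ) ≤ i ↔ f v ≤ f (σ j) :=
    Fin.le_def.symm.trans (σ.symm_apply_le (x := j) (y := v))
  have hlt (v : V) : i < (σ.symm v : ℕ) ↔ f (σ j) < f v :=
    Fin.lt_def.symm.trans (σ.lt_symm_apply (x := j) (y := v))
  refine le_of_eq_of_le ?_ (hb (f (σ j)))
  rw [cutEdges]
  congr 1
  ext p
  simp only [mem_filter, mem_univ, true_and]
  exact and_congr_right' (and_congr (hle p.1) (hlt p.2))

theorem exists_injective_card_cutEdges_le_cutWidth [Fintype V] (G : SimpleGraph V) :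
    ∃ f : V → ℕ, Injective f ∧ ∀ t, #(cutEdges G f t) ≤ cutWidth G := by
  have : Nonempty (Fin (Fintype.card V) ≃ V) := ⟨(Fintype.equivFin V).symm⟩
  obtain ⟨σ, hσ⟩ := ciInf_mem fun σ : Fin (Fintype.card V) ≃ V =>
    (range (Fintype.card V)).sup fun i =>
      #{p : V × V | G.Adj p.1 p.2 ∧ (σ.symm p.1 : ℕ) ≤ i ∧ i < (σ.symm p.2 : ℕ)}
  refine ⟨fun v => σ.symm v, Fin.val_injective.comp σ.symm.injective, fun t => ?_⟩
  by_cases ht : t < Fintype.card V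
  · rw [cutWidth, ← hσ]
    exact le_sup (f := fun i : ℕ =>
      #{p : V × V | G.Adj p.1 p.2 ∧ (σ.symm p.1 : ℕ) ≤ i ∧ i < (σ.symm p.2 : ℕ)})
      (mem_range.mpr ht)
  · rw [cutEdges, card_eq_zero.mpr (filter_eq_empty_iff.mpr fun p _ h => ?_)]
    · exact Nat.zero_le _
    · exact ht (h.2.2.trans (σ.symm p.2).is_lt)

theorem exists_injOn_card_cutEdges_induce_le_cutWidth (G : SimpleGraph V) (s : Set V)
    [Fintype s] :
    ∃ g : V → ℕ, s.InjOn g ∧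
      ∀ t, #(cutEdges (G.induce s) (g ∘ (↑)) t) ≤ cutWidth (G.induce s) := by
  obtain ⟨f, hf, hcut⟩ := exists_injective_card_cutEdges_le_cutWidth (G.induce s)
  have hext : extend Subtype.val f 0 ∘ ((↑) : s → V) = f :=
    funext (Subtype.val_injective.extend_apply f 0)
  refine ⟨extend Subtype.val f 0, fun u hu v hv huv => ?_, by rwa [hext]⟩
  have : f ⟨u, hu⟩ = f ⟨v, hv⟩ := by rw [← hext]; exact huv
  exact congrArg Subtype.val (hf this)

end Placement

theorem Prod.Lex.fst_eq_of_le_of_lt {α β : Type*} [PartialOrder α] [Preorder β] {a : α}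
    {b c : β} {x : α × β} (hle : toLex (a, b) ≤ toLex x) (hlt : toLex x < toLex (a, c)) :
    x.1 = a ∧ b ≤ x.2 ∧ x.2 < c := by
  rw [Prod.Lex.toLex_le_toLex] at hle
  rw [Prod.Lex.toLex_lt_toLex] at hlt
  rcases hle with hle | ⟨hx, hle⟩
  · rcases hlt with hlt | ⟨hx, -⟩
    · exact (lt_asymm hle hlt).elim
    · exact (hle.ne hx.symm).elim
  · rcases hlt with hlt | ⟨-, hlt⟩
    · exact (hlt.ne hx.symm).elim
    · exact ⟨hx.symm, hle, hlt⟩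

section RootFirst

variable {W : Type*} [DecidableEq W] (G : SimpleGraph W) (ρ : W) {k : ℕ} [NeZero k]
  (part : W → Fin k) (g : Fin k → W → ℕ)

-- The root sits at `(0, 0)`, before all of part `0` thanks to the shift `+ 1`, so that every cut
-- lies inside some part.
def rootFirstPlacement (v : W) : Fin k ×ₗ ℕ :=
  if v = ρ then toLex (0, 0) else toLex (part v, g (part v) v + 1)

variable {ρ part g}

theorem rootFirstPlacement_root : rootFirstPlacement ρ part g ρ = toLex (0, 0) := if_pos rfl

theorem rootFirstPlacement_of_ne {v : W} (hv : v ≠ ρ) :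
    rootFirstPlacement ρ part g v = toLex (part v, g (part v) v + 1) := if_neg hv

theorem rootFirstPlacement_injective (hg : ∀ i, Set.InjOn (g i) {w | w ≠ ρ ∧ part w = i}) :
    Injective (rootFirstPlacement ρ part g) := by
  intro u v huv
  by_cases hu : u = ρ <;> by_cases hv : v = ρ
  · exact hu.trans hv.symm
  all_goals
    simp only [rootFirstPlacement, hu, hv, if_true, if_false, toLex_inj, Prod.mk.injEq] at huv
  · omega
  · omega
  · obtain ⟨hpart, hgv⟩ := huv
    rw [← hpart] at hgv
    exact hg _ ⟨hu, rfl⟩ ⟨hv, hpart.symm⟩ (by omega)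

theorem card_cutEdges_rootFirstPlacement_root_le [Fintype W]
    (hroot : ∀ u v, G.Adj ρ u → G.Adj ρ v → part u = part v → u = v)
    (i : Fin k) (m : ℕ) :
    #{p ∈ cutEdges G (rootFirstPlacement ρ part g) (toLex (i, m)) | p.1 = ρ} ≤ k - i := by
  rw [← Fin.card_Ici]
  refine card_le_card_of_injOn (part ∘ Prod.snd) (fun p hp => ?_) fun p hp q hq hpq => ?_
  · simp only [cutEdges, coe_filter, mem_filter, mem_univ, true_and, Set.mem_ofPred_eq] at hp
    obtain ⟨⟨hadj, -, hlt⟩, hp1⟩ := hp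
    rw [rootFirstPlacement_of_ne (hp1 ▸ hadj).ne', Prod.Lex.toLex_lt_toLex] at hlt
    simp only [coe_Ici, Set.mem_Ici, comp_apply]
    rcases hlt with hlt | ⟨heq, -⟩
    · exact hlt.le
    · exact heq.le
  · simp only [cutEdges, coe_filter, mem_filter, mem_univ, true_and, Set.mem_ofPred_eq] at hp hq
    have h2 := hroot p.2 q.2 (hp.2 ▸ hp.1.1) (hq.2 ▸ hq.1.1) hpq
    exact Prod.ext (hp.2.trans hq.2.symm) h2

theorem card_cutEdges_rootFirstPlacement_nonroot_le [Fintype W]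
    (hin : ∀ u v, u ≠ ρ → v ≠ ρ → G.Adj u v → part u = part v) (i : Fin k) (m : ℕ) :
    #{p ∈ cutEdges G (rootFirstPlacement ρ part g) (toLex (i, m)) | p.1 ≠ ρ} ≤
      #(cutEdges (G.induce {w | w ≠ ρ ∧ part w = i}) (g i ∘ (↑)) (m - 1)) := by
  refine card_le_card_of_surjOn (Prod.map (↑) (↑)) fun p hp => ?_
  simp only [cutEdges, coe_filter, mem_filter, mem_univ, true_and, Set.mem_ofPred_eq] at hp
  obtain ⟨⟨hadj, hle, hlt⟩, hp1⟩ := hp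
  have hp2 : p.2 ≠ ρ := by
    rintro h
    rw [h, rootFirstPlacement_root, Prod.Lex.toLex_lt_toLex] at hlt
    simp at hlt
  have hpart := hin _ _ hp1 hp2 hadj
  rw [rootFirstPlacement_of_ne hp1] at hle
  rw [rootFirstPlacement_of_ne hp2, ← hpart] at hlt
  obtain ⟨hi, hle, hlt⟩ := Prod.Lex.fst_eq_of_le_of_lt hle hlt
  subst hi
  refine ⟨(⟨p.1, hp1, rfl⟩, ⟨p.2, hp2, hpart.symm⟩), ?_, rfl⟩
  simp only [cutEdges, coe_filter, mem_univ, true_and, Set.mem_ofPred_eq, SimpleGraph.comap_adj,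
    Function.Embedding.coe_subtype, comp_apply]
  exact ⟨hadj, by omega, by omega⟩

theorem card_cutEdges_rootFirstPlacement_le [Fintype W]
    (hin : ∀ u v, u ≠ ρ → v ≠ ρ → G.Adj u v → part u = part v)
    (hroot : ∀ u v, G.Adj ρ u → G.Adj ρ v → part u = part v → u = v)
    (i : Fin k) (m : ℕ) :
    #(cutEdges G (rootFirstPlacement ρ part g) (toLex (i, m))) ≤
      #(cutEdges (G.induce {w | w ≠ ρ ∧ part w = i}) (g i ∘ (↑)) (m - 1)) + (k - i) := by
  rw [← card_filter_add_card_filter_not (fun p : W × W => p.1 ≠ ρ)]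
  exact add_le_add (card_cutEdges_rootFirstPlacement_nonroot_le G hin i m)
    (by simpa only [not_not] using card_cutEdges_rootFirstPlacement_root_le G hroot i m)

end RootFirst

-- `i : Fin k` is 0-indexed, so the bound `cutWidth T_i + k + 1 - i` reads `... + k - i`.
theorem cutwidth_tree_le_general {W : Type*} [Fintype W] [DecidableEq W]
    (T : SimpleGraph W) (ρ : W) (k : ℕ) (part : W → Fin k)
    (hin : ∀ u v, u ≠ ρ → v ≠ ρ → T.Adj u v → part u = part v)
    (hroot : ∀ i : Fin k, ∃! v, T.Adj ρ v ∧ part v = i) :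
    cutWidth T ≤ Finset.univ.sup (fun i : Fin k =>
      cutWidth (T.induce {w | w ≠ ρ ∧ part w = i}) + k - (i : ℕ)) := by
  have : NeZero k := NeZero.of_pos (part ρ).pos
  have hroot' : ∀ u v, T.Adj ρ u → T.Adj ρ v → part u = part v → u = v :=
    fun u v hu hv h => (hroot (part v)).unique ⟨hu, h⟩ ⟨hv, rfl⟩
  choose g hg_inj hg using fun i : Fin k =>
    exists_injOn_card_cutEdges_induce_le_cutWidth T {w | w ≠ ρ ∧ part w = i}
  refine cutWidth_le_of_injective T (rootFirstPlacement_injective hg_inj) fun t => ?_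
  obtain ⟨⟨i, m⟩, rfl⟩ := toLex.surjective t
  calc #(cutEdges T (rootFirstPlacement ρ part g) (toLex (i, m)))
      ≤ cutWidth (T.induce {w | w ≠ ρ ∧ part w = i}) + (k - i) :=
        (card_cutEdges_rootFirstPlacement_le T hin hroot' i m).trans (by gcongr; exact hg i _)
    _ = cutWidth (T.induce {w | w ≠ ρ ∧ part w = i}) + k - i :=
        (Nat.add_sub_assoc i.is_lt.le _).symm
    _ ≤ _ :=
      le_sup (f := fun j : Fin k => cutWidth (T.induce {w | w ≠ ρ ∧ part w = j}) + k - j)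
        (mem_univ i)

/-- If `T` is a finite tree rooted at `ρ` whose `k` subtrees attached to the
root are given (in an arbitrary order) by the parts `part⁻¹(i)` of `V \ {ρ}`, then
`cutWidth T ≤ max_i (cutWidth T_i + k + 1 - i)` (with subtrees indexed `1,…,k`;
here `i : Fin k` is 0-indexed so the bound reads `cutWidth T_i + k - i`). -/
theorem cutwidth_tree_le {W : Type*} [Fintype W] [DecidableEq W]
    (T : SimpleGraph W) (hT : T.IsTree) (ρ : W) (k : ℕ) (part : W → Fin k)
    (hin : ∀ u v, u ≠ ρ → v ≠ ρ → T.Adj u v → part u = part v)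
    (hroot : ∀ i : Fin k, ∃! v, T.Adj ρ v ∧ part v = i) :
    cutWidth T ≤ Finset.univ.sup (fun i : Fin k =>
      cutWidth (T.induce {w | w ≠ ρ ∧ part w = i}) + k - (i : ℕ)) :=
  cutwidth_tree_le_general T ρ k part hin hroot
end

section
/- Let Z_r denote the total number of vertices in the first r generations (including the root, generation 0) of a Galton–Watson branching process with Poisson(d) offspring distribution, d > 1. Then for every t > 0, sup over r of E[exp(t·Z_r·d^{-r})] is finite. -/
open MeasureTheory ProbabilityTheory
open scoped NNReal ENNReal

/-- The set of vertices (in Ulam–Harris labeling by finite sequences) in generation `r`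
of the Galton–Watson tree with offspring numbers `N u ω`. -/
noncomputable def gwGen {Ω : Type*} (N : List ℕ → Ω → ℕ) (ω : Ω) : ℕ → Finset (List ℕ)
  | 0 => {([] : List ℕ)}
  | r + 1 => (gwGen N ω r).biUnion fun u =>
      (Finset.range (N u ω)).image fun j => u ++ [j]

/-- All vertices in the first `ℓ` generations (generations `0,…,ℓ`) of the
Galton–Watson tree. -/
noncomputable def gwTree {Ω : Type*} (N : List ℕ → Ω → ℕ) (ω : Ω) (ℓ : ℕ) :
    Finset (List ℕ) :=
  (Finset.range (ℓ + 1)).biUnion (gwGen N ω)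

/-!
Let `Y_r` be the size of generation `r`. Given the first `r` generations, the offspring numbers
of generation `r` are independent Poisson(`d`) variables, so integrating them out gives
`E exp (s Z_{r+1} + a Y_{r+1}) = E exp (s Z_r + d (exp (s + a) - 1) Y_r)`. Hence
`log E exp (s Z_r) = b_r(s)` with `b_0 = s` and `b_{r+1} = s + d (exp b_r - 1)`, and
`f_r(x) = b_r(x / d^r)` satisfies `f_{r+1}(x) = x / d^{r+1} + d (exp f_r(x/d) - 1)`.
For `x` below a threshold `ε`, induction with `exp z - 1 ≤ z exp z` gives
`f_r(x) ≤ (∑_{k ≤ r} d^{-k}) x exp (x / ε)`, and a bound on `f_r(x/d)` uniform in `r`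
gives one on `f_r(x)`, so uniform bounds propagate from `[0, ε]` to all `x ≥ 0`.
-/

open Real

lemma Real.exp_sub_one_le_mul_exp (z : ℝ) : exp z - 1 ≤ z * exp z := by
  have h := mul_le_mul_of_nonneg_right (one_sub_le_exp_neg z) (exp_pos z).le
  rw [← exp_add, neg_add_cancel, exp_zero] at h
  linarith

/-- `gwLogMgf D s r a = log E[exp (s Z_r + a Y_r)]` for Poisson(`D`) offspring. -/
noncomputable def gwLogMgf (D s : ℝ) : ℕ → ℝ → ℝ
  | 0, a => s + a
  | r + 1, a => gwLogMgf D s r (D * (exp (s + a) - 1))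

lemma gwLogMgf_succ' (D s : ℝ) (r : ℕ) (a : ℝ) :
    gwLogMgf D s (r + 1) a = s + D * (exp (gwLogMgf D s r a) - 1) := by
  induction r generalizing a with
  | zero => rfl
  | succ r ih => exact ih _

section Rescaled

variable {D : ℝ}

lemma gwLogMgf_div_pow_succ (x : ℝ) (r : ℕ) :
    gwLogMgf D (x / D ^ (r + 1)) (r + 1) 0
      = x / D ^ (r + 1) + D * (exp (gwLogMgf D (x / D / D ^ r) r 0) - 1) := by
  rw [gwLogMgf_succ', div_div, ← pow_succ']

noncomputable def gwThreshold (D : ℝ) : ℝ := (D - 1) ^ 2 / (D * exp 1)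

lemma gwThreshold_pos (hD : 1 < D) : 0 < gwThreshold D := by
  have : 0 < D - 1 := by linarith
  unfold gwThreshold
  positivity

/-- This identity is what fixes the value of `gwThreshold D`. -/
lemma div_gwThreshold_sub_div_gwThreshold (hD : 1 < D) (x : ℝ) :
    x / gwThreshold D - x / D / gwThreshold D = (1 - D⁻¹)⁻¹ * (x / D) * exp 1 := by
  have : D - 1 ≠ 0 := by linarith
  have : D ≠ 0 := by linarith
  unfold gwThreshold
  field_simp

lemma geom_sum_inv_le (hD : 1 < D) (n : ℕ) : ∑ k ∈ Finset.range n, D⁻¹ ^ k ≤ (1 - D⁻¹)⁻¹ := by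
  have := geom_sum_Ico_le_of_lt_one (m := 0) (n := n) (inv_nonneg.2 (by linarith))
    (inv_lt_one_of_one_lt₀ hD)
  rwa [← Finset.range_eq_Ico, pow_zero, one_div] at this

lemma gwLogMgf_div_pow_le_of_le_threshold (hD : 1 < D) (r : ℕ) {x : ℝ} (hx : 0 ≤ x)
    (hxε : x ≤ gwThreshold D) :
    gwLogMgf D (x / D ^ r) r 0
      ≤ (∑ k ∈ Finset.range (r + 1), D⁻¹ ^ k) * x * exp (x / gwThreshold D) := by
  have hD0 : 0 < D := by linarith
  have hε := gwThreshold_pos hD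
  induction r generalizing x with
  | zero =>
    simpa [gwLogMgf] using le_mul_of_one_le_right hx (one_le_exp (div_nonneg hx hε.le))
  | succ r ih =>
    set c := ∑ k ∈ Finset.range (r + 1), D⁻¹ ^ k
    set y := x / D
    have hy : 0 ≤ y := by positivity
    have hyx : y ≤ x := div_le_self hx hD.le
    have hc : c ≤ (1 - D⁻¹)⁻¹ := geom_sum_inv_le hD (r + 1)
    set z := c * y * exp (y / gwThreshold D)
    have hexponent : y / gwThreshold D + z ≤ x / gwThreshold D := by
      have : y / gwThreshold D ≤ 1 := (div_le_one hε).2 (hyx.trans hxε)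
      have : 0 ≤ (1 - D⁻¹)⁻¹ := inv_nonneg.2 (sub_nonneg.2 (inv_le_one_of_one_le₀ hD.le))
      have : 0 ≤ c := Finset.sum_nonneg fun k _ => by positivity
      have : z ≤ (1 - D⁻¹)⁻¹ * y * exp 1 := by unfold z; gcongr
      linarith [div_gwThreshold_sub_div_gwThreshold hD x]
    calc gwLogMgf D (x / D ^ (r + 1)) (r + 1) 0
        = x / D ^ (r + 1) + D * (exp (gwLogMgf D (y / D ^ r) r 0) - 1) :=
          gwLogMgf_div_pow_succ x r
      _ ≤ x / D ^ (r + 1) + D * (z * exp z) := by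
          gcongr
          exact (sub_le_sub_right (exp_le_exp.2 (ih hy (hyx.trans hxε))) 1).trans
            (exp_sub_one_le_mul_exp z)
      _ = x / D ^ (r + 1) + c * x * exp (y / gwThreshold D + z) := by
          rw [exp_add]; unfold z y; field_simp
      _ ≤ D⁻¹ ^ (r + 1) * x * exp (x / gwThreshold D) + c * x * exp (x / gwThreshold D) := by
          gcongr
          rw [inv_pow, ← div_eq_inv_mul]
          exact le_mul_of_one_le_right (by positivity) (one_le_exp (by positivity))
      _ = (∑ k ∈ Finset.range (r + 2), D⁻¹ ^ k) * x * exp (x / gwThreshold D) := by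
          rw [Finset.sum_range_succ _ (r + 1)]; ring

lemma bddAbove_gwLogMgf_div_pow_of_le_threshold (hD : 1 < D) {x : ℝ} (hx : 0 ≤ x)
    (hxε : x ≤ gwThreshold D) :
    BddAbove (Set.range fun r => gwLogMgf D (x / D ^ r) r 0) := by
  refine ⟨(1 - D⁻¹)⁻¹ * x * exp (x / gwThreshold D), Set.forall_mem_range.2 fun r => ?_⟩
  refine (gwLogMgf_div_pow_le_of_le_threshold hD r hx hxε).trans ?_
  gcongr
  exact geom_sum_inv_le hD (r + 1)

lemma bddAbove_gwLogMgf_div_pow_of_div (hD : 1 ≤ D) {x : ℝ} (hx : 0 ≤ x)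
    (h : BddAbove (Set.range fun r => gwLogMgf D (x / D / D ^ r) r 0)) :
    BddAbove (Set.range fun r => gwLogMgf D (x / D ^ r) r 0) := by
  obtain ⟨B, hB⟩ := h
  refine ⟨x + D * exp B, Set.forall_mem_range.2 fun r => ?_⟩
  cases r with
  | zero => simpa [gwLogMgf] using mul_nonneg (zero_le_one.trans hD) (exp_pos B).le
  | succ r =>
    rw [gwLogMgf_div_pow_succ]
    have hB' := exp_le_exp.2 (hB (Set.mem_range_self r))
    have : x / D ^ (r + 1) ≤ x := div_le_self hx (one_le_pow₀ hD)
    nlinarith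

lemma bddAbove_gwLogMgf_div_pow (hD : 1 < D) {x : ℝ} (hx : 0 ≤ x) :
    BddAbove (Set.range fun r => gwLogMgf D (x / D ^ r) r 0) := by
  obtain ⟨n, hn⟩ := pow_unbounded_of_one_lt (x / gwThreshold D) hD
  induction n generalizing x with
  | zero =>
    refine bddAbove_gwLogMgf_div_pow_of_le_threshold hD hx ?_
    rw [pow_zero, div_lt_one (gwThreshold_pos hD)] at hn
    exact hn.le
  | succ n ih =>
    refine bddAbove_gwLogMgf_div_pow_of_div hD.le hx (ih (by positivity) ?_)
    rwa [div_right_comm, div_lt_iff₀ (by linarith), ← pow_succ]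

end Rescaled

section Tree

variable {Ω : Type*} (N : List ℕ → Ω → ℕ) (ω : Ω)

lemma length_of_mem_gwGen {r : ℕ} {u : List ℕ} (hu : u ∈ gwGen N ω r) : u.length = r := by
  induction r generalizing u with
  | zero => simp_all [gwGen]
  | succ r ih =>
    simp only [gwGen, Finset.mem_biUnion, Finset.mem_image] at hu
    obtain ⟨v, hv, j, -, rfl⟩ := hu
    simp [ih hv]

lemma gwTree_succ (r : ℕ) : gwTree N ω (r + 1) = gwTree N ω r ∪ gwGen N ω (r + 1) := by
  rw [gwTree, gwTree, Finset.range_add_one, Finset.biUnion_insert, Finset.union_comm]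

lemma card_gwTree_succ (r : ℕ) :
    (gwTree N ω (r + 1)).card = (gwTree N ω r).card + (gwGen N ω (r + 1)).card := by
  rw [gwTree_succ, Finset.card_union_of_disjoint]
  simp only [gwTree, Finset.disjoint_left, Finset.mem_biUnion, Finset.mem_range]
  rintro u ⟨k, hk, hu⟩ hu'
  have := length_of_mem_gwGen N ω hu
  have := length_of_mem_gwGen N ω hu'
  omega

lemma card_gwGen_succ (r : ℕ) :
    (gwGen N ω (r + 1)).card = ∑ u ∈ gwGen N ω r, N u ω := by
  rw [gwGen, Finset.card_biUnion]
  · refine Finset.sum_congr rfl fun u _ => ?_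
    rw [Finset.card_image_of_injective _ (fun j j' h => by simpa using h), Finset.card_range]
  · intro u hu v hv huv
    simp only [Function.onFun, Finset.disjoint_left, Finset.mem_image]
    rintro _ ⟨j, -, rfl⟩ ⟨j', -, h⟩
    have hlen : v.length = u.length := by
      rw [length_of_mem_gwGen N ω hu, length_of_mem_gwGen N ω hv]
    exact huv (List.append_inj_left h hlen).symm

lemma gwGen_congr {N' : List ℕ → Ω → ℕ} {r : ℕ}
    (h : ∀ u : List ℕ, u.length < r → N u ω = N' u ω) : gwGen N ω r = gwGen N' ω r := by
  induction r with
  | zero => rfl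
  | succ r ih =>
    rw [gwGen, gwGen, ih fun u hu => h u (by omega)]
    refine Finset.biUnion_congr rfl fun u hu => ?_
    rw [h u (by rw [length_of_mem_gwGen N' ω hu]; omega)]

end Tree

section Measurability

variable {Ω : Type*} {m : MeasurableSpace Ω} {N : List ℕ → Ω → ℕ}

lemma measurable_gwGen_of_forall (hN : ∀ u, Measurable (N u)) (r : ℕ) :
    Measurable fun ω => gwGen N ω r := by
  induction r with
  | zero => exact measurable_const
  | succ r ih =>
    let next (ω : Ω) (S : Finset (List ℕ)) : Finset (List ℕ) :=
      S.biUnion fun u => (Finset.range (N u ω)).image fun j => u ++ [j]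
    have hnext : ∀ S, Measurable fun ω => next ω S := fun S => by
      let offspring (ω : Ω) (u : S) : ℕ := N u ω
      have : (fun ω => next ω S) = (fun c : S → ℕ =>
          S.attach.biUnion fun u => (Finset.range (c u)).image fun j => u.1 ++ [j]) ∘ offspring := by
        ext ω : 1
        simp only [next, offspring, Function.comp_apply]
        ext v
        simp
      rw [this]
      exact (measurable_of_countable _).comp (measurable_pi_lambda _ fun u => hN u)
    have hpair : Measurable fun p : Ω × Finset (List ℕ) => next p.1 p.2 :=
      measurable_from_prod_countable_left hnext
    have hprod : Measurable fun ω => (ω, gwGen N ω r) := measurable_id.prodMk ih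
    show Measurable ((fun p : Ω × Finset (List ℕ) => next p.1 p.2) ∘ fun ω => (ω, gwGen N ω r))
    exact hpair.comp hprod

lemma measurable_gwGen {r : ℕ} (hN : ∀ u : List ℕ, u.length < r → Measurable (N u)) :
    Measurable fun ω => gwGen N ω r := by
  classical
  let N' (u : List ℕ) : Ω → ℕ := if u.length < r then N u else 0
  have hN' : ∀ u, Measurable (N' u) := fun u => by
    unfold N'
    split_ifs with hu
    exacts [hN u hu, measurable_const]
  have : (fun ω => gwGen N ω r) = fun ω => gwGen N' ω r :=
    funext fun ω => gwGen_congr N ω fun u hu => by simp [N', hu]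
  exact this ▸ measurable_gwGen_of_forall hN' r

lemma measurable_gwTree {r : ℕ} (hN : ∀ u : List ℕ, u.length < r → Measurable (N u)) :
    Measurable fun ω => gwTree N ω r := by
  induction r with
  | zero => exact measurable_const (a := {[]})
  | succ r ih =>
    simp only [gwTree_succ]
    exact (measurable_of_countable fun p : Finset (List ℕ) × Finset (List ℕ) => p.1 ∪ p.2).comp
      ((ih fun u hu => hN u (by omega)).prodMk (measurable_gwGen hN))

end Measurability

section Lintegral

variable {Ω ι β : Type*} [MeasurableSpace Ω] {μ : Measure Ω} [mβ : MeasurableSpace β]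

lemma lintegral_mul_prod_eq_of_iIndepFun {X : ι → Ω → β} (hX : ∀ i, Measurable (X i))
    (hindep : iIndepFun X μ) {A : Set ι} {T : Finset ι} (hAT : Disjoint A T) {F : Ω → ℝ≥0∞}
    (hF : Measurable[⨆ i ∈ A, mβ.comap (X i)] F) {g : β → ℝ≥0∞} (hg : Measurable g) :
    ∫⁻ ω, F ω * ∏ i ∈ T, g (X i ω) ∂μ = (∫⁻ ω, F ω ∂μ) * ∏ i ∈ T, ∫⁻ ω, g (X i ω) ∂μ := by
  have hle : ∀ i, mβ.comap (X i) ≤ ‹MeasurableSpace Ω› := fun i => (hX i).comap_le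
  have hprod : Measurable[⨆ i ∈ (T : Set ι), mβ.comap (X i)] fun ω => ∏ i ∈ T, g (X i ω) :=
    Finset.measurable_prod _ fun i hi =>
      hg.comp (Measurable.of_comap_le (le_iSup₂ (f := fun i (_ : i ∈ (T : Set ι)) =>
        mβ.comap (X i)) i hi))
  rw [lintegral_mul_eq_lintegral_mul_lintegral_of_independent_measurableSpace
      (iSup₂_le fun i _ => hle i) (iSup₂_le fun i _ => hle i)
      (indep_iSup_of_disjoint hle hindep hAT) hF hprod]
  exact congrArg _ (lintegral_prod_eq_prod_lintegral_of_indepFun T (fun i => g ∘ X i)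
    (hindep.comp _ fun _ => hg) fun i => hg.comp (hX i))

lemma lintegral_eq_of_setLIntegral_fiber_eq {α : Type*} [MeasurableSpace α] [Countable α]
    [MeasurableSingletonClass α] {X : Ω → α} (hX : Measurable X) {f g : Ω → ℝ≥0∞}
    (h : ∀ a, ∫⁻ ω in X ⁻¹' {a}, f ω ∂μ = ∫⁻ ω in X ⁻¹' {a}, g ω ∂μ) :
    ∫⁻ ω, f ω ∂μ = ∫⁻ ω, g ω ∂μ := by
  have hunion : (⋃ a, X ⁻¹' {a}) = Set.univ := by
    rw [← Set.preimage_iUnion, Set.iUnion_of_singleton, Set.preimage_univ]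
  rw [← setLIntegral_univ, ← setLIntegral_univ g, ← hunion,
    lintegral_iUnion (fun a => hX (measurableSet_singleton a)) (pairwise_disjoint_fiber X),
    lintegral_iUnion (fun a => hX (measurableSet_singleton a)) (pairwise_disjoint_fiber X)]
  exact tsum_congr h

end Lintegral

lemma lintegral_exp_mul_poissonPMF (d : ℝ≥0) (c : ℝ) :
    ∫⁻ n, ENNReal.ofReal (exp (c * n)) ∂(poissonPMF d).toMeasure
      = ENNReal.ofReal (exp (d * (exp c - 1))) := by
  have hsum := (summable_pow_div_factorial (d * exp c)).mul_left (exp (-d))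
  have hterm : ∀ n : ℕ, ENNReal.ofReal (exp (c * n)) * (poissonPMF d).toMeasure {n}
      = ENNReal.ofReal (exp (-d) * ((d * exp c) ^ n / n.factorial)) := fun n => by
    rw [PMF.toMeasure_apply_singleton _ _ (measurableSet_singleton n),
      ← poissonPMFReal_ofReal_eq_poissonPMF, ← ENNReal.ofReal_mul (exp_nonneg _), poissonPMFReal,
      mul_comm c, exp_nat_mul]
    ring_nf
  have hexp : ∑' n : ℕ, (d * exp c) ^ n / n.factorial = exp (d * exp c) := by
    rw [exp_eq_exp_ℝ, NormedSpace.exp_eq_tsum_div]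
  rw [lintegral_countable', tsum_congr hterm,
    ← ENNReal.ofReal_tsum_of_nonneg (fun n => by positivity) hsum, tsum_mul_left, hexp, ← exp_add]
  ring_nf

section GaltonWatson

variable {Ω : Type*} [MeasurableSpace Ω] {μ : Measure Ω} {d : ℝ≥0} {N : List ℕ → Ω → ℕ}

lemma lintegral_exp_mul_offspring (hmeas : ∀ u, Measurable (N u))
    (hlaw : ∀ u, μ.map (N u) = (poissonPMF d).toMeasure) (u : List ℕ) (c : ℝ) :
    ∫⁻ ω, ENNReal.ofReal (exp (c * N u ω)) ∂μ = ENNReal.ofReal (exp (d * (exp c - 1))) := by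
  rw [← lintegral_map (measurable_of_countable fun n : ℕ => ENNReal.ofReal (exp (c * n)))
    (hmeas u), hlaw u, lintegral_exp_mul_poissonPMF]

lemma setLIntegral_exp_card_gwGen_succ (hmeas : ∀ u, Measurable (N u)) (hindep : iIndepFun N μ)
    (hlaw : ∀ u, μ.map (N u) = (poissonPMF d).toMeasure) {r : ℕ} {T : Finset (List ℕ)}
    (hT : ∀ u ∈ T, u.length = r) (s a : ℝ) :
    ∫⁻ ω in (fun ω => gwGen N ω r) ⁻¹' {T},
        ENNReal.ofReal (exp (s * (gwTree N ω (r + 1)).card + a * (gwGen N ω (r + 1)).card)) ∂μ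
      = ∫⁻ ω in (fun ω => gwGen N ω r) ⁻¹' {T},
        ENNReal.ofReal (exp (s * (gwTree N ω r).card
          + d * (exp (s + a) - 1) * (gwGen N ω r).card)) ∂μ := by
  set E := (fun ω => gwGen N ω r) ⁻¹' {T}
  have hE : MeasurableSet E := measurable_gwGen (fun u _ => hmeas u) (measurableSet_singleton T)
  let f (S : Finset (List ℕ)) : ℝ≥0∞ := ENNReal.ofReal (exp (s * S.card))
  let G (ω : Ω) : ℝ≥0∞ := f (gwTree N ω r)
  let g (n : ℕ) : ℝ≥0∞ := ENNReal.ofReal (exp ((s + a) * n))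
  have hsplit : ∀ ω ∈ E,
      ENNReal.ofReal (exp (s * (gwTree N ω (r + 1)).card + a * (gwGen N ω (r + 1)).card))
        = G ω * ∏ u ∈ T, g (N u ω) := fun ω (hω : gwGen N ω r = T) => by
    rw [card_gwTree_succ, card_gwGen_succ, hω, ← ENNReal.ofReal_prod_of_nonneg
      (fun _ _ => (exp_pos _).le), ← ENNReal.ofReal_mul (exp_pos _).le, ← exp_sum, ← exp_add]
    push_cast
    simp only [add_mul, Finset.sum_add_distrib, ← Finset.mul_sum]
    ring_nf
  let short : Set (List ℕ) := {u | u.length < r}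
  have hshort : ∀ u ∈ short,
      Measurable[⨆ v ∈ short, MeasurableSpace.comap (N v) inferInstance] (N u) := fun u hu =>
    Measurable.of_comap_le (le_iSup₂ (f := fun v (_ : v ∈ short) =>
      MeasurableSpace.comap (N v) inferInstance) u hu)
  have hGE : Measurable[⨆ v ∈ short, MeasurableSpace.comap (N v) inferInstance]
      (E.indicator G) :=
    ((measurable_of_countable f).comp (measurable_gwTree hshort)).indicator
      (measurable_gwGen hshort (measurableSet_singleton T))
  have hdisj : Disjoint short T :=
    Set.disjoint_right.2 fun u hu hu' => (hT u hu).not_lt hu'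
  calc _ = ∫⁻ ω in E, G ω * ∏ u ∈ T, g (N u ω) ∂μ := setLIntegral_congr_fun hE hsplit
    _ = (∫⁻ ω, E.indicator G ω ∂μ) * ∏ u ∈ T, ∫⁻ ω, g (N u ω) ∂μ := by
        rw [← lintegral_indicator hE, ← lintegral_mul_prod_eq_of_iIndepFun hmeas hindep hdisj hGE
          (measurable_of_countable g)]
        simp only [Set.indicator_mul_left]
    _ = ∫⁻ ω in E, G ω * ENNReal.ofReal (exp (d * (exp (s + a) - 1))) ^ T.card ∂μ := by
        simp only [g, lintegral_exp_mul_offspring hmeas hlaw, Finset.prod_const]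
        rw [lintegral_indicator hE]
        exact (lintegral_mul_const _
          ((measurable_of_countable f).comp (measurable_gwTree fun u _ => hmeas u))).symm
    _ = _ := setLIntegral_congr_fun hE fun ω (hω : gwGen N ω r = T) => by
        rw [hω, ← ENNReal.ofReal_pow (exp_pos _).le, ← exp_nat_mul,
          ← ENNReal.ofReal_mul (exp_pos _).le, ← exp_add]
        ring_nf

theorem lintegral_exp_card_gwTree_add_card_gwGen [IsProbabilityMeasure μ]
    (hmeas : ∀ u, Measurable (N u)) (hindep : iIndepFun N μ)
    (hlaw : ∀ u, μ.map (N u) = (poissonPMF d).toMeasure) (s : ℝ) (r : ℕ) (a : ℝ) :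
    ∫⁻ ω, ENNReal.ofReal (exp (s * (gwTree N ω r).card + a * (gwGen N ω r).card)) ∂μ
      = ENNReal.ofReal (exp (gwLogMgf d s r a)) := by
  induction r generalizing a with
  | zero => simp [gwTree, gwGen, gwLogMgf]
  | succ r ih =>
    rw [gwLogMgf, ← ih]
    refine lintegral_eq_of_setLIntegral_fiber_eq (measurable_gwGen (r := r) fun u _ => hmeas u)
      fun T => ?_
    by_cases hT : ∀ u ∈ T, u.length = r
    · exact setLIntegral_exp_card_gwGen_succ hmeas hindep hlaw hT s a
    · have : (fun ω => gwGen N ω r) ⁻¹' {T} = ∅ :=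
        Set.eq_empty_of_forall_notMem fun ω (hω : gwGen N ω r = T) =>
          hT fun u hu => length_of_mem_gwGen N ω (hω ▸ hu)
      simp [this]

end GaltonWatson

/-- For a Galton–Watson branching process with Poisson(d) offspring,
`d > 1`, and `Z_r` the total population through generation `r`, for every `t > 0`
the quantities `E[exp(t·Z_r·d^{-r})]` are uniformly bounded in `r`. -/
theorem gw_exp_moment_bounded {Ω : Type*} [MeasurableSpace Ω] (μ : Measure Ω)
    [IsProbabilityMeasure μ] (d : ℝ≥0) (hd : 1 < (d : ℝ))
    (N : List ℕ → Ω → ℕ) (hmeas : ∀ u, Measurable (N u))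
    (hindep : iIndepFun N μ)
    (hlaw : ∀ u, μ.map (N u) = (poissonPMF d).toMeasure)
    (t : ℝ) (ht : 0 < t) :
    ∃ B : ℝ≥0∞, B ≠ ⊤ ∧ ∀ r : ℕ,
      ∫⁻ ω, ENNReal.ofReal (Real.exp (t * (gwTree N ω r).card / (d : ℝ) ^ r)) ∂μ ≤ B := by
  obtain ⟨B, hB⟩ := bddAbove_gwLogMgf_div_pow hd ht.le
  refine ⟨ENNReal.ofReal (Real.exp B), ENNReal.ofReal_ne_top, fun r => ?_⟩
  have hformula := lintegral_exp_card_gwTree_add_card_gwGen hmeas hindep hlaw (t / d ^ r) r 0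
  simp only [zero_mul, add_zero, div_mul_eq_mul_div] at hformula
  rw [hformula]
  exact ENNReal.ofReal_le_ofReal (Real.exp_le_exp.2 (hB (Set.mem_range_self r)))
end

section
/- Consider the ferromagnetic Ising model on a finite tree T with interactions 0 ≤ β_{uv} ≤ β and arbitrary external fields (possibly ±∞, i.e., some spins frozen). Let U ⊆ Λ ⊂ V and let η^+, η^− be configurations on Λ differing only on U, with η^+ ≡ + and η^− ≡ − on U. Then for any vertex v, 0 ≤ P(σ_v = + | σ_Λ = η^+) − P(σ_v = + | σ_Λ = η^−) ≤ Σ_{u ∈ U} (tanh β)^{d(u,v)}, where d(u,v) is the graph distance in T. -/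
open scoped Classical BigOperators

/-- The ±1 spin value of a Boolean configuration at a vertex. -/
def spin {V : Type*} (σ : V → Bool) (v : V) : ℝ := if σ v then 1 else -1

/-- The Hamiltonian of the Ising model on a graph `G` with pair interactions `β`
(assumed symmetric) and external fields `h`; each edge is counted once. -/
noncomputable def ham {V : Type*} [Fintype V] (G : SimpleGraph V)
    (β : V → V → ℝ) (h : V → ℝ) (σ : V → Bool) : ℝ :=
  (∑ u : V, ∑ v : V, if G.Adj u v then β u v * spin σ u * spin σ v else 0) / 2
    + ∑ v : V, h v * spin σ v

/-- The Gibbs conditional probability that the spin at `v` is `+`, given that the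
configuration agrees with `η` on `Λ`. -/
noncomputable def condProbPlus {V : Type*} [Fintype V] [DecidableEq V]
    (G : SimpleGraph V) (β : V → V → ℝ) (h : V → ℝ)
    (v : V) (Λ : Finset V) (η : V → Bool) : ℝ :=
  (∑ σ : V → Bool, if σ v = true ∧ ∀ u ∈ Λ, σ u = η u then Real.exp (ham G β h σ) else 0) /
  (∑ σ : V → Bool, if ∀ u ∈ Λ, σ u = η u then Real.exp (ham G β h σ) else 0)

/-!
Flipping the boundary spins of `U` one at a time, the bound telescopes, so it suffices to flip a
single boundary spin `u`. Let `w` be the neighbour of `u` towards `v`; cutting the edge `u w`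
separates `u` from `v`. Exchanging the `u`-sides of two configurations changes the energy only
on `u w`; this gives the Markov property across `u w` and the identity
`Z⁺⁺ Z⁻⁻ = e^{4β_{uw}} Z⁺⁻ Z⁻⁺` for the partition functions with `σ_u, σ_w` fixed. If `w` is
frozen, the flip is invisible at `v`. Otherwise conditioning on `σ_w` factors the influence of
`u` on `v` as (influence of `u` on `w`) × (influence of `w` on `v`); the first factor is at most
`tanh β_{uw}` by the identity above and AM-GM, the second at most `tanh b ^ d(w, v)` by induction.
-/

open Finset Real

namespace Real

theorem tanh_eq_exp_two_mul (x : ℝ) : tanh x = (exp (2 * x) - 1) / (exp (2 * x) + 1) := by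
  have hx : exp (2 * x) = exp x * exp x := by rw [← exp_add, two_mul]
  rw [tanh_eq, hx, exp_neg]
  field_simp

theorem tanh_le_tanh {x y : ℝ} (hxy : x ≤ y) : tanh x ≤ tanh y := by
  rw [tanh_eq_exp_two_mul, tanh_eq_exp_two_mul, div_le_div_iff₀ (by positivity) (by positivity)]
  nlinarith [exp_le_exp.2 (by linarith : 2 * x ≤ 2 * y)]

theorem tanh_nonneg {x : ℝ} (hx : 0 ≤ x) : 0 ≤ tanh x := by
  simpa using tanh_le_tanh hx

end Real

theorem div_add_sub_div_add_le_tanh {a b c d J : ℝ} (ha : 0 < a) (hb : 0 < b) (hc : 0 < c)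
    (hd : 0 < d) (hJ : 0 ≤ J) (had : a * d = exp (4 * J) * (b * c)) :
    0 ≤ a / (a + b) - c / (c + d) ∧ a / (a + b) - c / (c + d) ≤ tanh J := by
  set E := exp (2 * J)
  have hE : 1 ≤ E := one_le_exp (by linarith)
  have hadE : a * d = E ^ 2 * (b * c) := by rw [had, ← exp_nat_mul]; ring_nf
  have hsub : a / (a + b) - c / (c + d) = (a * d - b * c) / ((a + b) * (c + d)) := by
    field_simp; ring
  -- AM-GM, since `(a c) (b d) = (E b c)²`
  have hamgm : 2 * E * (b * c) ≤ a * c + b * d := by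
    nlinarith [sq_nonneg (a * c - b * d), mul_pos ha hc, mul_pos hb hd, mul_pos hb hc]
  rw [hsub]
  refine ⟨div_nonneg ?_ (by positivity), ?_⟩
  · nlinarith [mul_nonneg (sub_nonneg.2 (one_le_pow₀ (n := 2) hE)) (mul_pos hb hc).le]
  rw [tanh_eq_exp_two_mul, div_le_div_iff₀ (by positivity) (by positivity)]
  nlinarith [mul_nonneg (sub_nonneg.2 hE) (sub_nonneg.2 hamgm)]

theorem Set.piecewise_piecewise_piecewise {α β : Type*} (s : Set α) [∀ i, Decidable (i ∈ s)]
    (f g : α → β) : s.piecewise (s.piecewise f g) (s.piecewise g f) = f := by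
  ext x
  by_cases hx : x ∈ s <;> simp [hx]

theorem Set.piecewise_eq_left_of_eqOn_compl {α β : Type*} {s : Set α}
    [∀ i, Decidable (i ∈ s)] {f g : α → β} (hfg : Set.EqOn f g sᶜ) : s.piecewise f g = f := by
  ext x
  by_cases hx : x ∈ s
  · simp [hx]
  · simp [hx, hfg hx]

section

variable {V : Type*}

theorem spin_piecewise (P : Set V) (σ τ : V → Bool) :
    spin (P.piecewise σ τ) = P.piecewise (spin σ) (spin τ) := by
  ext x
  by_cases hx : x ∈ P <;> simp [spin, hx]

structure SimpleGraph.IsUniqueEdgeOut (G : SimpleGraph V) (P : Set V) (u w : V) : Prop where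
  adj : G.Adj u w
  mem : u ∈ P
  not_mem : w ∉ P
  eq_of_adj : ∀ x y, G.Adj x y → x ∈ P → y ∉ P → x = u ∧ y = w

theorem SimpleGraph.IsUniqueEdgeOut.adj_and_iff {G : SimpleGraph V} {P : Set V} {u w : V}
    (hP : G.IsUniqueEdgeOut P u w) (x y : V) :
    G.Adj x y ∧ (x ∈ P ↔ y ∉ P) ↔ x = u ∧ y = w ∨ x = w ∧ y = u := by
  constructor
  · rintro ⟨hxy, hxP⟩
    by_cases hx : x ∈ P
    · exact .inl (hP.eq_of_adj x y hxy hx (hxP.1 hx))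
    · obtain ⟨rfl, rfl⟩ := hP.eq_of_adj y x hxy.symm (not_not.1 (mt hxP.2 hx)) hx
      exact .inr ⟨rfl, rfl⟩
  · rintro (⟨rfl, rfl⟩ | ⟨rfl, rfl⟩)
    · exact ⟨hP.adj, iff_of_true hP.mem hP.not_mem⟩
    · exact ⟨hP.adj.symm, iff_of_false hP.not_mem (not_not.2 hP.mem)⟩

theorem ham_piecewise_add_ham_piecewise (G : SimpleGraph V) [Fintype V] (β : V → V → ℝ)
    (h : V → ℝ) {P : Set V} {u w : V} (hP : G.IsUniqueEdgeOut P u w) (σ τ : V → Bool) :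
    ham G β h (P.piecewise σ τ) + ham G β h (P.piecewise τ σ)
      + (β u w + β w u) / 2 * ((spin σ u - spin τ u) * (spin σ w - spin τ w))
      = ham G β h σ + ham G β h τ := by
  simp only [ham, spin_piecewise]
  set s := spin σ
  set t := spin τ
  set D : V → V → ℝ := fun x y => (s x - t x) * (s y - t y)
  have hedge : ∀ x y,
      (if G.Adj x y then β x y * P.piecewise s t x * P.piecewise s t y else 0)
        + (if G.Adj x y then β x y * P.piecewise t s x * P.piecewise t s y else 0)
        + (if G.Adj x y ∧ (x ∈ P ↔ y ∉ P) then β x y * D x y else 0)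
      = (if G.Adj x y then β x y * s x * s y else 0)
        + (if G.Adj x y then β x y * t x * t y else 0) := by
    intro x y
    by_cases hxy : G.Adj x y <;> by_cases hx : x ∈ P <;> by_cases hy : y ∈ P <;>
      simp only [hxy, hx, hy, D, ↓reduceIte, Set.piecewise_eq_of_mem, Set.piecewise_eq_of_notMem,
        not_true_eq_false, not_false_eq_true, iff_true, iff_false, and_true, and_false, and_self,
        add_zero] <;> ring
  have hcross : ∑ x, ∑ y, (if G.Adj x y ∧ (x ∈ P ↔ y ∉ P) then β x y * D x y else 0)
      = (β u w + β w u) * D u w := by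
    have huw := hP.adj.ne
    simp only [hP.adj_and_iff]
    rw [Fintype.sum_eq_add u w huw (fun x hx => by simp [hx.1, hx.2])]
    simp only [D, huw, huw.symm, true_and, false_and, or_false, false_or,
      sum_ite_eq', mem_univ, ↓reduceIte]
    ring
  have hfield : ∀ x, h x * P.piecewise s t x + h x * P.piecewise t s x = h x * s x + h x * t x := by
    intro x
    by_cases hx : x ∈ P <;> simp [hx, add_comm]
  have hE := Finset.sum_congr rfl fun x (_ : x ∈ univ) =>
    Finset.sum_congr rfl fun y (_ : y ∈ univ) => hedge x y
  have hF := Finset.sum_congr rfl fun x (_ : x ∈ univ) => hfield x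
  simp only [Finset.sum_add_distrib, hcross] at hE hF
  linear_combination hE / 2 + hF

section GibbsSum

variable [Fintype V] [DecidableEq V] {G : SimpleGraph V} {β : V → V → ℝ} {h : V → ℝ}
  {Λ : Finset V}

/-- `Z_Λ^η · E[F | σ = η on Λ]`. -/
noncomputable def gibbsSum (G : SimpleGraph V) (β : V → V → ℝ) (h : V → ℝ) (Λ : Finset V)
    (η : V → Bool) (F : (V → Bool) → ℝ) : ℝ :=
  ∑ σ ∈ univ.filter (fun σ => ∀ x ∈ Λ, σ x = η x), F σ * exp (ham G β h σ)

def plusAt (v : V) (σ : V → Bool) : ℝ := if σ v then 1 else 0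

theorem gibbsSum_one_pos (η : V → Bool) : 0 < gibbsSum G β h Λ η 1 :=
  Finset.sum_pos (fun σ _ => by simp [exp_pos]) ⟨η, by simp⟩

theorem condProbPlus_eq_div (v : V) (η : V → Bool) :
    condProbPlus G β h v Λ η = gibbsSum G β h Λ η (plusAt v) / gibbsSum G β h Λ η 1 := by
  simp only [condProbPlus, gibbsSum, Finset.sum_filter, plusAt]
  congr 1 <;> refine Finset.sum_congr rfl fun σ _ => ?_
  · by_cases hσ : σ v <;> simp [hσ]
  · simp

theorem gibbsSum_congr {η η' : V → Bool} (hη : ∀ x ∈ Λ, η x = η' x) (F : (V → Bool) → ℝ) :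
    gibbsSum G β h Λ η F = gibbsSum G β h Λ η' F := by
  simp only [gibbsSum]
  congr 1
  exact Finset.filter_congr fun σ _ => forall₂_congr fun x hx => by rw [hη x hx]

omit [Fintype V] [DecidableEq V] in
theorem agrees_piecewise (P : Set V) {σ τ η₁ η₂ : V → Bool} (hσ : ∀ x ∈ Λ, σ x = η₁ x)
    (hτ : ∀ x ∈ Λ, τ x = η₂ x) : ∀ x ∈ Λ, P.piecewise σ τ x = P.piecewise η₁ η₂ x := by
  intro x hx
  by_cases hxP : x ∈ P <;> simp [hxP, hσ x hx, hτ x hx]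

/-- Reindex the double sum by the involution exchanging the `P`-parts of `σ` and `τ`: it only
changes the energy on the edge `u w`. -/
theorem gibbsSum_mul_gibbsSum {P : Set V} {u w : V} (hP : G.IsUniqueEdgeOut P u w)
    (hu : u ∈ Λ) (hw : w ∈ Λ) (η₁ η₂ : V → Bool) {F₁ F₂ : (V → Bool) → ℝ}
    (hF₁ : ∀ σ τ, F₁ (P.piecewise σ τ) = F₁ τ) (hF₂ : ∀ σ τ, F₂ (P.piecewise σ τ) = F₂ τ) :
    gibbsSum G β h Λ η₁ F₁ * gibbsSum G β h Λ η₂ F₂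
      = exp ((β u w + β w u) / 2 * ((spin η₁ u - spin η₂ u) * (spin η₁ w - spin η₂ w)))
        * (gibbsSum G β h Λ (P.piecewise η₁ η₂) F₂ * gibbsSum G β h Λ (P.piecewise η₂ η₁) F₁) := by
  set swap : (V → Bool) × (V → Bool) → (V → Bool) × (V → Bool) :=
    fun q => (P.piecewise q.1 q.2, P.piecewise q.2 q.1)
  have hswap : ∀ q, swap (swap q) = q := fun q => by
    simp only [swap, Set.piecewise_piecewise_piecewise]
  simp only [gibbsSum]
  rw [Finset.sum_mul_sum, Finset.sum_mul_sum, ← Finset.sum_product', ← Finset.sum_product',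
    Finset.mul_sum]
  refine Finset.sum_nbij' swap swap ?_ ?_ (fun q _ => hswap q) (fun q _ => hswap q) ?_
  · rintro ⟨σ, τ⟩ hq
    simp only [Finset.mem_product, Finset.mem_filter, Finset.mem_univ, true_and] at hq ⊢
    exact ⟨agrees_piecewise P hq.1 hq.2, agrees_piecewise P hq.2 hq.1⟩
  · rintro ⟨σ, τ⟩ hq
    simp only [Finset.mem_product, Finset.mem_filter, Finset.mem_univ, true_and] at hq ⊢
    have h₁ := agrees_piecewise P hq.1 hq.2
    have h₂ := agrees_piecewise P hq.2 hq.1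
    simp only [Set.piecewise_piecewise_piecewise] at h₁ h₂
    exact ⟨h₁, h₂⟩
  · rintro ⟨σ, τ⟩ hq
    simp only [Finset.mem_product, Finset.mem_filter, Finset.mem_univ, true_and] at hq
    have hspin : ∀ x ∈ Λ, spin σ x = spin η₁ x ∧ spin τ x = spin η₂ x := fun x hx => by
      simp [spin, hq.1 x hx, hq.2 x hx]
    have hham := ham_piecewise_add_ham_piecewise G β h hP σ τ
    rw [(hspin u hu).1, (hspin u hu).2, (hspin w hw).1, (hspin w hw).2] at hham
    have hexp := congrArg exp hham
    simp only [exp_add] at hexp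
    simp only [swap, hF₁, hF₂]
    linear_combination (F₁ σ * F₂ τ) * hexp.symm

end GibbsSum

section Conditioning

variable [Fintype V] [DecidableEq V] {G : SimpleGraph V} {β : V → V → ℝ} {h : V → ℝ}
  {Λ : Finset V}

omit [Fintype V] in
theorem agrees_insert_update_iff {w : V} (hw : w ∉ Λ) (σ η : V → Bool) (t : Bool) :
    (∀ x ∈ insert w Λ, σ x = Function.update η w t x) ↔ σ w = t ∧ ∀ x ∈ Λ, σ x = η x := by
  rw [Finset.forall_mem_insert, Function.update_self]
  refine and_congr Iff.rfl (forall₂_congr fun x hx => ?_)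
  rw [Function.update_of_ne (ne_of_mem_of_not_mem hx hw)]

theorem gibbsSum_split {w : V} (hw : w ∉ Λ) (η : V → Bool) (F : (V → Bool) → ℝ) :
    gibbsSum G β h Λ η F = gibbsSum G β h (insert w Λ) (Function.update η w true) F
      + gibbsSum G β h (insert w Λ) (Function.update η w false) F := by
  simp only [gibbsSum, agrees_insert_update_iff hw]
  rw [← Finset.sum_filter_add_sum_filter_not _ (fun σ : V → Bool => σ w = true)
      (fun σ => F σ * exp (ham G β h σ)),
    Finset.filter_filter, Finset.filter_filter]
  simp only [Bool.not_eq_true, and_comm]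

theorem gibbsSum_plusAt_of_mem {v : V} (hv : v ∈ Λ) (η : V → Bool) :
    gibbsSum G β h Λ η (plusAt v) = if η v then gibbsSum G β h Λ η 1 else 0 := by
  simp only [gibbsSum]
  split_ifs with hηv
  · refine Finset.sum_congr rfl fun σ hσ => ?_
    simp [plusAt, (Finset.mem_filter.1 hσ).2 v hv, hηv]
  · refine Finset.sum_eq_zero fun σ hσ => ?_
    simp [plusAt, (Finset.mem_filter.1 hσ).2 v hv, hηv]

theorem condProbPlus_of_mem {v : V} (hv : v ∈ Λ) (η : V → Bool) :
    condProbPlus G β h v Λ η = if η v then 1 else 0 := by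
  rw [condProbPlus_eq_div, gibbsSum_plusAt_of_mem hv]
  split_ifs
  · exact div_self (gibbsSum_one_pos η).ne'
  · exact zero_div _

theorem condProbPlus_congr (v : V) {η η' : V → Bool} (hη : ∀ x ∈ Λ, η x = η' x) :
    condProbPlus G β h v Λ η = condProbPlus G β h v Λ η' := by
  rw [condProbPlus_eq_div, condProbPlus_eq_div, gibbsSum_congr hη, gibbsSum_congr hη]

theorem condProbPlus_self_of_not_mem {w : V} (hw : w ∉ Λ) (η : V → Bool) :
    condProbPlus G β h w Λ η = gibbsSum G β h (insert w Λ) (Function.update η w true) 1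
      / (gibbsSum G β h (insert w Λ) (Function.update η w true) 1
        + gibbsSum G β h (insert w Λ) (Function.update η w false) 1) := by
  rw [condProbPlus_eq_div, gibbsSum_split hw η (plusAt w), gibbsSum_split hw η 1,
    gibbsSum_plusAt_of_mem (mem_insert_self w Λ), gibbsSum_plusAt_of_mem (mem_insert_self w Λ)]
  simp

theorem condProbPlus_eq_total {w : V} (hw : w ∉ Λ) (v : V) (η : V → Bool) :
    condProbPlus G β h v Λ η
      = condProbPlus G β h w Λ η * condProbPlus G β h v (insert w Λ) (Function.update η w true)
        + (1 - condProbPlus G β h w Λ η)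
          * condProbPlus G β h v (insert w Λ) (Function.update η w false) := by
  have hT := gibbsSum_one_pos (G := G) (β := β) (h := h) (Λ := insert w Λ)
    (Function.update η w true)
  have hF := gibbsSum_one_pos (G := G) (β := β) (h := h) (Λ := insert w Λ)
    (Function.update η w false)
  rw [condProbPlus_self_of_not_mem hw, condProbPlus_eq_div, condProbPlus_eq_div,
    condProbPlus_eq_div, gibbsSum_split hw η, gibbsSum_split hw η]
  field_simp
  ring

end Conditioning

section Cut

variable [Fintype V] [DecidableEq V] {G : SimpleGraph V} {β : V → V → ℝ} {h : V → ℝ}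
  {Λ : Finset V} {P : Set V} {u w : V}

omit [Fintype V] [DecidableEq V] in
theorem plusAt_piecewise {v : V} (hv : v ∉ P) (σ τ : V → Bool) :
    plusAt v (P.piecewise σ τ) = plusAt v τ := by
  simp [plusAt, hv]

omit [Fintype V] in
theorem piecewise_update_update (hu : u ∈ P) (hw : w ∉ P) (η : V → Bool) (s s' t t' : Bool) :
    P.piecewise (Function.update (Function.update η u s) w t)
      (Function.update (Function.update η u s') w t')
      = Function.update (Function.update η u s) w t' := by
  ext x
  by_cases hx : x ∈ P
  · have hxw : x ≠ w := ne_of_mem_of_not_mem hx hw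
    simp [hx, hxw]
  · have hxu : x ≠ u := fun hxu => hx (hxu ▸ hu)
    simp [hx, hxu, Function.update_apply]

omit [Fintype V] in
theorem eqOn_compl_update (hu : u ∈ P) (ζ : V → Bool) (s s' : Bool) :
    Set.EqOn (Function.update ζ u s) (Function.update ζ u s') Pᶜ := fun x hx => by
  have hxu : x ≠ u := fun e => hx (e ▸ hu)
  rw [Function.update_of_ne hxu, Function.update_of_ne hxu]

theorem condProbPlus_eq_of_eqOn_compl (hP : G.IsUniqueEdgeOut P u w) (hu : u ∈ Λ) (hw : w ∈ Λ)
    {v : V} (hv : v ∉ P) {η₁ η₂ : V → Bool} (hη : Set.EqOn η₁ η₂ Pᶜ) :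
    condProbPlus G β h v Λ η₁ = condProbPlus G β h v Λ η₂ := by
  have key := gibbsSum_mul_gibbsSum (β := β) (h := h) hP hu hw η₁ η₂ (F₂ := 1)
    (plusAt_piecewise hv) (fun _ _ => rfl)
  have hspin : spin η₁ w = spin η₂ w := by simp [spin, hη hP.not_mem]
  rw [Set.piecewise_eq_left_of_eqOn_compl hη, Set.piecewise_eq_left_of_eqOn_compl hη.symm, hspin,
    sub_self, mul_zero, mul_zero, exp_zero, one_mul] at key
  rw [condProbPlus_eq_div, condProbPlus_eq_div,
    div_eq_div_iff (gibbsSum_one_pos η₁).ne' (gibbsSum_one_pos η₂).ne']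
  linear_combination key

theorem condProbPlus_update_sub_le_tanh (hP : G.IsUniqueEdgeOut P u w) (hu : u ∈ Λ)
    (hw : w ∉ Λ) (hJ : 0 ≤ β u w + β w u) (η : V → Bool) :
    0 ≤ condProbPlus G β h w Λ (Function.update η u true)
        - condProbPlus G β h w Λ (Function.update η u false) ∧
      condProbPlus G β h w Λ (Function.update η u true)
        - condProbPlus G β h w Λ (Function.update η u false) ≤ tanh ((β u w + β w u) / 2) := by
  have key := gibbsSum_mul_gibbsSum (β := β) (h := h) hP (mem_insert_of_mem hu)
    (mem_insert_self w Λ) (Function.update (Function.update η u true) w true)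
    (Function.update (Function.update η u false) w false) (F₁ := 1) (F₂ := 1)
    (fun _ _ => rfl) (fun _ _ => rfl)
  rw [piecewise_update_update hP.mem hP.not_mem, piecewise_update_update hP.mem hP.not_mem] at key
  simp only [spin, Function.update_self, Function.update_of_ne hP.adj.ne, ↓reduceIte,
    Bool.false_eq_true] at key
  rw [condProbPlus_self_of_not_mem hw, condProbPlus_self_of_not_mem hw]
  refine div_add_sub_div_add_le_tanh (gibbsSum_one_pos _) (gibbsSum_one_pos _)
    (gibbsSum_one_pos _) (gibbsSum_one_pos _) (by linarith) ?_
  convert key using 3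
  ring

/-- Condition on `σ w`: once `σ w` is fixed, the spin at `u` is invisible at `v`. -/
theorem condProbPlus_update_sub_eq_mul (hP : G.IsUniqueEdgeOut P u w) (hu : u ∈ Λ) (hw : w ∉ Λ)
    {v : V} (hv : v ∉ P) (η : V → Bool) :
    condProbPlus G β h v Λ (Function.update η u true)
        - condProbPlus G β h v Λ (Function.update η u false)
      = (condProbPlus G β h w Λ (Function.update η u true)
          - condProbPlus G β h w Λ (Function.update η u false))
        * (condProbPlus G β h v (insert w Λ) (Function.update (Function.update η u false) w true)
          - condProbPlus G β h v (insert w Λ)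
            (Function.update (Function.update η u false) w false)) := by
  have hmarkov : ∀ t, condProbPlus G β h v (insert w Λ)
      (Function.update (Function.update η u true) w t)
      = condProbPlus G β h v (insert w Λ) (Function.update (Function.update η u false) w t) := by
    intro t
    rw [Function.update_comm hP.adj.ne, Function.update_comm hP.adj.ne]
    exact condProbPlus_eq_of_eqOn_compl hP (mem_insert_of_mem hu) (mem_insert_self w Λ) hv
      (eqOn_compl_update hP.mem _ true false)
  rw [condProbPlus_eq_total hw v, condProbPlus_eq_total hw v, hmarkov, hmarkov]
  ring

end Cut

namespace SimpleGraph

variable {G : SimpleGraph V} {u w : V}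

theorem IsAcyclic.isUniqueEdgeOut (hG : G.IsAcyclic) (hadj : G.Adj u w) :
    G.IsUniqueEdgeOut {x | (G.deleteEdges {s(u, w)}).Reachable u x} u w where
  adj := hadj
  mem := Reachable.refl u
  not_mem := isBridge_iff.mp (isAcyclic_iff_forall_adj_isBridge.mp hG hadj)
  eq_of_adj x y hxy hx hy := by
    by_cases he : s(x, y) = s(u, w)
    · rcases Sym2.eq_iff.mp he with ⟨rfl, rfl⟩ | ⟨rfl, rfl⟩
      · exact ⟨rfl, rfl⟩
      · exact absurd (Reachable.refl _) hy
    · exact absurd (hx.trans (deleteEdges_adj.mpr ⟨hxy, by simpa using he⟩).reachable) hy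

theorem Connected.exists_adj_dist_add_one (hG : G.Connected) {v : V} (huv : u ≠ v) :
    ∃ w, G.Adj u w ∧ G.dist w v + 1 = G.dist u v ∧ (G.deleteEdges {s(u, w)}).Reachable w v := by
  obtain ⟨q, hq⟩ := hG.exists_walk_length_eq_dist u v
  cases q with
  | nil => exact absurd rfl huv
  | @cons _ w _ hadj r =>
    rw [Walk.length_cons] at hq
    have hdist : G.dist w v + 1 = G.dist u v := by
      have := dist_le r
      have := hG.dist_triangle (u := u) (v := w) (w := v)
      have := dist_eq_one_iff_adj.mpr hadj
      omega
    refine ⟨w, hadj, hdist, ⟨r.toDeleteEdges {s(u, w)} fun e he hew => ?_⟩⟩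
    rw [Set.mem_singleton_iff.mp hew] at he
    have hu := r.fst_mem_support_of_mem_edges he
    have := dist_le (r.dropUntil u hu)
    have := r.length_dropUntil_le_length hu
    omega

end SimpleGraph

theorem sub_le_sum_of_forall_update_sub_le {ι : Type*} [DecidableEq ι] {f : (ι → Bool) → ℝ}
    {Λ : Finset ι} {c : ι → ℝ} (hf : ∀ η η', (∀ x ∈ Λ, η x = η' x) → f η = f η')
    (hflip : ∀ η, ∀ a ∈ Λ, 0 ≤ f (Function.update η a true) - f (Function.update η a false) ∧
      f (Function.update η a true) - f (Function.update η a false) ≤ c a)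
    {U : Finset ι} (hUΛ : U ⊆ Λ) {ηp ηm : ι → Bool} (hU : ∀ u ∈ U, ηp u = true ∧ ηm u = false)
    (hagree : ∀ u ∈ Λ, u ∉ U → ηp u = ηm u) :
    0 ≤ f ηp - f ηm ∧ f ηp - f ηm ≤ ∑ u ∈ U, c u := by
  induction U using Finset.induction_on generalizing ηp with
  | empty =>
    rw [hf ηp ηm fun x hx => hagree x hx (notMem_empty x)]
    simp
  | insert a U ha ih =>
    have haU := mem_insert_self a U
    have hflip_a := hflip ηp a (hUΛ haU)
    rw [Function.update_eq_self_iff.mpr (hU a haU).1.symm] at hflip_a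
    have hrest := ih ((subset_insert a U).trans hUΛ) (ηp := Function.update ηp a false)
      (fun u hu => by
        rw [Function.update_of_ne (ne_of_mem_of_not_mem hu ha)]
        exact hU u (mem_insert_of_mem hu))
      (fun u hu huU => by
        by_cases hua : u = a
        · subst hua; simp [(hU u haU).2]
        · rw [Function.update_of_ne hua]
          exact hagree u hu (by simp [hua, huU]))
    rw [sum_insert ha]
    constructor <;> linarith

section Influence

variable [Fintype V] [DecidableEq V] {G : SimpleGraph V} {β : V → V → ℝ} {h : V → ℝ} {b : ℝ}

theorem condProbPlus_update_sub_le_tanh_pow_dist (hG : G.IsTree)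
    (hβ : ∀ x y, G.Adj x y → 0 ≤ β x y ∧ β x y ≤ b) (v : V) {Λ : Finset V} {u : V}
    (hu : u ∈ Λ) (η : V → Bool) :
    0 ≤ condProbPlus G β h v Λ (Function.update η u true)
        - condProbPlus G β h v Λ (Function.update η u false) ∧
      condProbPlus G β h v Λ (Function.update η u true)
        - condProbPlus G β h v Λ (Function.update η u false) ≤ tanh b ^ G.dist u v := by
  induction hn : G.dist u v using Nat.strong_induction_on generalizing u Λ η with
  | _ n ih =>
  obtain rfl | huv := eq_or_ne u v
  · rw [condProbPlus_of_mem hu, condProbPlus_of_mem hu, ← hn, SimpleGraph.dist_self]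
    simp
  obtain ⟨w, hadj, hdist, hwv⟩ := hG.connected.exists_adj_dist_add_one huv
  have hP := hG.isAcyclic.isUniqueEdgeOut hadj
  set P := {x | (G.deleteEdges {s(u, w)}).Reachable u x}
  have hvP : v ∉ P := fun hv => hP.not_mem (hv.trans hwv.symm)
  have hJ : 0 ≤ β u w + β w u ∧ (β u w + β w u) / 2 ≤ b := by
    have := hβ u w hadj
    have := hβ w u hadj.symm
    constructor <;> linarith
  have htanh : 0 ≤ tanh b := tanh_nonneg (by linarith)
  by_cases hwΛ : w ∈ Λ
  · rw [condProbPlus_eq_of_eqOn_compl hP hu hwΛ hvP (eqOn_compl_update hP.mem η true false),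
      sub_self]
    exact ⟨le_rfl, pow_nonneg htanh n⟩
  obtain ⟨hq₀, hq⟩ := condProbPlus_update_sub_le_tanh (h := h) hP hu hwΛ hJ.1 η
  obtain ⟨hp₀, hp⟩ := ih _ (by omega) (mem_insert_self w Λ) (Function.update η u false) rfl
  rw [condProbPlus_update_sub_eq_mul hP hu hwΛ hvP, ← hn, ← hdist, pow_succ']
  exact ⟨mul_nonneg hq₀ hp₀, mul_le_mul (hq.trans (tanh_le_tanh hJ.2)) hp hp₀ htanh⟩

end Influence

end

theorem ising_tree_boundary_effect_general {V : Type*} [Fintype V] [DecidableEq V]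
    (G : SimpleGraph V) (hT : G.IsTree)
    (β : V → V → ℝ)
    (b : ℝ) (hβ : ∀ u v, 0 ≤ β u v ∧ β u v ≤ b)
    (h : V → ℝ) (U Λ : Finset V) (hUΛ : U ⊆ Λ) (v : V)
    (ηp ηm : V → Bool)
    (hU : ∀ u ∈ U, ηp u = true ∧ ηm u = false)
    (hagree : ∀ u ∈ Λ, u ∉ U → ηp u = ηm u) :
    0 ≤ condProbPlus G β h v Λ ηp - condProbPlus G β h v Λ ηm ∧
      condProbPlus G β h v Λ ηp - condProbPlus G β h v Λ ηm
        ≤ ∑ u ∈ U, Real.tanh b ^ (G.dist u v) :=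
  sub_le_sum_of_forall_update_sub_le (fun _ _ => condProbPlus_congr v)
    (fun η _ ha => condProbPlus_update_sub_le_tanh_pow_dist hT (fun x y _ => hβ x y) v ha η)
    hUΛ hU hagree

/-- For the ferromagnetic Ising model on a finite tree with interactions
`0 ≤ β_{uv} ≤ b` and arbitrary external fields, if `η⁺, η⁻` are boundary conditions on
`Λ` differing exactly on `U ⊆ Λ` with `η⁺ ≡ +`, `η⁻ ≡ −` on `U`, then
`0 ≤ P(σ_v = + | η⁺) − P(σ_v = + | η⁻) ≤ Σ_{u∈U} (tanh b)^{d(u,v)}`. -/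
theorem ising_tree_boundary_effect {V : Type*} [Fintype V] [DecidableEq V]
    (G : SimpleGraph V) (hT : G.IsTree)
    (β : V → V → ℝ) (hsym : ∀ u v, β u v = β v u)
    (b : ℝ) (hb : 0 ≤ b) (hβ : ∀ u v, 0 ≤ β u v ∧ β u v ≤ b)
    (h : V → ℝ) (U Λ : Finset V) (hUΛ : U ⊆ Λ) (v : V)
    (ηp ηm : V → Bool)
    (hU : ∀ u ∈ U, ηp u = true ∧ ηm u = false)
    (hagree : ∀ u ∈ Λ, u ∉ U → ηp u = ηm u) :
    0 ≤ condProbPlus G β h v Λ ηp - condProbPlus G β h v Λ ηm ∧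
      condProbPlus G β h v Λ ηp - condProbPlus G β h v Λ ηm
        ≤ ∑ u ∈ U, Real.tanh b ^ (G.dist u v) :=
  ising_tree_boundary_effect_general G hT β b hβ h U Λ hUΛ v ηp ηm hU hagree
end

section
/- Let X ~ Poisson(d) and, conditionally on X = x, let Y_1,...,Y_x be i.i.d. Poisson(d), with order statistics Y_{(1)} ≤ ... ≤ Y_{(x)}. Define W = X + max_{1 ≤ i ≤ X}(Y_{(i)} − i) (with W = X if X = 0). Then there exists a constant C = C(d) such that W is stochastically dominated by C + Poisson(d), i.e., P(W ≥ w + C) ≤ P(Poisson(d) ≥ w) for all integers w ≥ 0. -/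
/-!
If `W ≥ v` and `X = x ≤ v`, some order statistic satisfies `Y₍ᵢ₎ ≥ v - x + i`, so at least
`m = x + 1 - i` of `Y₁, …, Yₓ` are `≥ v + 1 - m`. A union bound over `x`, `m` and the set of these
indices, with the factorial moments `E (X choose m) = dᵐ / m!`, gives
`P(W ≥ v) ≤ Q(v + 1) + ∑_{m=1}^{v} dᵐ / m! · Q(v + 1 - m)ᵐ` for the Poisson tail
`Q(s) = P(Po(d) ≥ s) ≤ min (dˢ / s!, 1 - e⁻ᵈ)`. Bounding `Qᵐ ≤ Q² (1 - e⁻ᵈ)ᵐ⁻²` and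
`xⁱ / i!² ≤ eᵃ (x / a)ⁱ / i!`, the right-hand side is `O(dᵛ / v!)`. Finally
`d^(w+C) / (w+C)! ≤ dʷ / w! · dᶜ / C!` and `dᶜ / C! → 0`, so for a large shift `C` this falls
below `e⁻ᵈ dʷ / w! ≤ P(Po(d) ≥ w)`.
-/

open MeasureTheory ProbabilityTheory
open scoped NNReal ENNReal

/-- The sorted list (in increasing order) of the values `Y_1(ω),…,Y_x(ω)`. -/
noncomputable def sortedVals {Ω : Type*} (Y : ℕ → Ω → ℕ) (x : ℕ) (ω : Ω) : List ℕ :=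
  Multiset.sort ((List.range x).map fun j => Y j ω : Multiset ℕ) (· ≤ ·)

/-- `W = X + max_{1 ≤ i ≤ X}(Y_{(i)} − i)` (and `W = X` if `X = 0`), where
`Y_{(1)} ≤ … ≤ Y_{(X)}` are the order statistics of `Y_1,…,Y_X`. -/
noncomputable def Wstat {Ω : Type*} (X : Ω → ℕ) (Y : ℕ → Ω → ℕ) (ω : Ω) : ℤ :=
  (X ω : ℤ) +
    if h : 1 ≤ X ω then
      (Finset.Icc 1 (X ω)).sup' (Finset.nonempty_Icc.mpr h)
        (fun i => ((sortedVals Y (X ω) ω).getD (i - 1) 0 : ℤ) - (i : ℤ))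
    else 0

open Finset Real Filter Topology
open scoped Nat

theorem sum_range_mul_pow_div_factorial_sq_le {a b : ℝ} (ha : 0 ≤ a) (hb : 0 ≤ b) (n : ℕ) :
    ∑ i ∈ range n, (a * b) ^ i / (i ! : ℝ) ^ 2 ≤ exp a * exp b :=
  calc ∑ i ∈ range n, (a * b) ^ i / (i ! : ℝ) ^ 2
      = ∑ i ∈ range n, a ^ i / i ! * (b ^ i / i !) := by
        refine sum_congr rfl fun i _ => ?_
        rw [mul_pow, sq, mul_div_mul_comm]
    _ ≤ ∑ i ∈ range n, exp a * (b ^ i / i !) := by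
        gcongr with i; exact pow_div_factorial_le_exp a ha i
    _ ≤ exp a * exp b := by
        rw [← mul_sum]; gcongr; exact sum_le_exp_of_nonneg hb n

theorem pow_add_div_factorial_add_le {d : ℝ} (hd : 0 ≤ d) (a b : ℕ) :
    d ^ (a + b) / (a + b)! ≤ d ^ a / a ! * (d ^ b / b !) := by
  have h : (a ! * b ! : ℝ) ≤ (a + b)! := by
    exact_mod_cast Nat.le_of_dvd (Nat.factorial_pos _)
      (Nat.factorial_mul_factorial_dvd_factorial_add a b)
  rw [pow_add, div_mul_div_comm]
  gcongr

theorem factorial_le_pow_mul_factorial (m i : ℕ) : (m + i)! ≤ (m + i) ^ i * m ! := by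
  have h := Nat.factorial_mul_descFactorial (Nat.le_add_left i m)
  rw [Nat.add_sub_cancel] at h
  rw [← h, mul_comm]
  exact Nat.mul_le_mul_right _ (Nat.descFactorial_le_pow _ _)

section TailSum

variable {d r : ℝ} {T : ℕ → ℝ}

theorem pow_div_factorial_mul_pow_le (hd : 0 ≤ d) (hT0 : ∀ s, 0 ≤ T s)
    (hTd : ∀ s, T s ≤ d ^ s / s !) (hTr : ∀ s, 1 ≤ s → T s ≤ exp (-r)) {m v : ℕ}
    (hm : 2 ≤ m) (hmv : m ≤ v) :
    d ^ m / m ! * T (v + 1 - m) ^ m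
      ≤ d ^ 2 * (d ^ v / v !) * (exp (-r) ^ (m - 2) * (d * v) ^ (v - m) / ((v - m)! : ℝ) ^ 2) := by
  obtain ⟨i, rfl⟩ := Nat.exists_eq_add_of_le hmv
  rw [show m + i + 1 - m = i + 1 by omega, Nat.add_sub_cancel_left]
  have hT : T (i + 1) ^ m ≤ exp (-r) ^ (m - 2) * (d ^ (i + 1) / i !) ^ 2 := by
    rw [← Nat.sub_add_cancel hm, pow_add, Nat.add_sub_cancel]
    gcongr
    · exact hT0 _
    · exact hTr _ le_add_self
    · exact hT0 _
    · exact (hTd _).trans (by gcongr; exact Nat.le_succ i)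
  have hfact : ((m + i)! : ℝ) ≤ (m + i : ℕ) ^ i * m ! := by
    exact_mod_cast factorial_le_pow_mul_factorial m i
  calc d ^ m / m ! * T (i + 1) ^ m
      ≤ d ^ m * ((m + i : ℕ) ^ i / (m + i)!) * (exp (-r) ^ (m - 2) * (d ^ (i + 1) / i !) ^ 2) := by
        have hinv : 1 / (m ! : ℝ) ≤ (m + i : ℕ) ^ i / (m + i)! := by
          rw [div_le_div_iff₀ (by positivity) (by positivity)]
          simpa using hfact
        rw [div_eq_mul_one_div (d ^ m)]
        exact mul_le_mul (mul_le_mul_of_nonneg_left hinv (by positivity)) hT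
          (pow_nonneg (hT0 _) _) (by positivity)
    _ = _ := by
        rw [mul_pow]
        push_cast
        field_simp
        ring

theorem sum_Icc_two_exp_neg_pow_mul_le (hd : 0 ≤ d) (hr : 0 < r) (v : ℕ) :
    ∑ m ∈ Icc 2 v, exp (-r) ^ (m - 2) * (d * v) ^ (v - m) / ((v - m)! : ℝ) ^ 2
      ≤ exp (2 * r + d * exp r / r) := by
  -- `a` is chosen so that `a * (r * v) = d * v * exp r`; then the `exp (r * v)` coming from
  -- `sum_range_mul_pow_div_factorial_sq_le` cancels the `exp (-r * v)` inside `exp (-r) ^ (m - 2)`.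
  set a := d * exp r / r
  have hterm : ∀ m ∈ Icc 2 v, exp (-r) ^ (m - 2) * (d * v) ^ (v - m) / ((v - m)! : ℝ) ^ 2
      = exp (2 * r - r * v) * ((a * (r * v)) ^ (v - m) / ((v - m)! : ℝ) ^ 2) := by
    intro m hm
    obtain ⟨hm2, hmv⟩ := mem_Icc.mp hm
    have hexp : exp (-r) ^ (m - 2) = exp (2 * r - r * v) * exp r ^ (v - m) := by
      rw [← exp_nat_mul, ← exp_nat_mul, ← exp_add]
      congr 1
      push_cast [hm2, hmv]
      ring
    have ha : a * (r * v) = d * v * exp r := by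
      simp only [a]; field_simp
    rw [hexp, ha, mul_pow]
    ring
  calc ∑ m ∈ Icc 2 v, exp (-r) ^ (m - 2) * (d * v) ^ (v - m) / ((v - m)! : ℝ) ^ 2
      = exp (2 * r - r * v) * ∑ m ∈ Icc 2 v, (a * (r * v)) ^ (v - m) / ((v - m)! : ℝ) ^ 2 := by
        rw [sum_congr rfl hterm, mul_sum]
    _ ≤ exp (2 * r - r * v) * ∑ i ∈ range (v + 1), (a * (r * v)) ^ i / (i ! : ℝ) ^ 2 := by
        gcongr
        rw [← sum_range_reflect]
        refine sum_le_sum_of_subset_of_nonneg (fun m hm => ?_) (fun _ _ _ => by positivity)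
        · simp only [mem_Icc, mem_range] at hm ⊢; omega
    _ ≤ exp (2 * r - r * v) * (exp a * exp (r * v)) := by
        gcongr
        exact sum_range_mul_pow_div_factorial_sq_le (by positivity) (by positivity) _
    _ = exp (2 * r + a) := by
        rw [← exp_add, ← exp_add]; ring_nf

theorem add_sum_pow_div_factorial_mul_pow_le (hd : 0 ≤ d) (hr : 0 < r) (hT0 : ∀ s, 0 ≤ T s)
    (hTd : ∀ s, T s ≤ d ^ s / s !) (hTr : ∀ s, 1 ≤ s → T s ≤ exp (-r)) {v : ℕ} (hv : 1 ≤ v) :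
    T (v + 1) + ∑ m ∈ Icc 1 v, d ^ m / m ! * T (v + 1 - m) ^ m
      ≤ (2 * d + d ^ 2 * exp (2 * r + d * exp r / r)) * (d ^ v / v !) := by
  have hsucc : T (v + 1) ≤ d * (d ^ v / v !) :=
    (hTd _).trans (by simpa [mul_comm] using pow_add_div_factorial_add_le hd v 1)
  have hone : d ^ 1 / (1 : ℕ)! * T (v + 1 - 1) ^ 1 ≤ d * (d ^ v / v !) := by
    simpa using mul_le_mul_of_nonneg_left (hTd v) hd
  have htwo : ∑ m ∈ Icc 2 v, d ^ m / m ! * T (v + 1 - m) ^ m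
      ≤ d ^ 2 * exp (2 * r + d * exp r / r) * (d ^ v / v !) :=
    calc ∑ m ∈ Icc 2 v, d ^ m / m ! * T (v + 1 - m) ^ m
        ≤ ∑ m ∈ Icc 2 v, d ^ 2 * (d ^ v / v !) *
            (exp (-r) ^ (m - 2) * (d * v) ^ (v - m) / ((v - m)! : ℝ) ^ 2) :=
          sum_le_sum fun m hm => pow_div_factorial_mul_pow_le hd hT0 hTd hTr
            (mem_Icc.mp hm).1 (mem_Icc.mp hm).2
      _ ≤ d ^ 2 * (d ^ v / v !) * exp (2 * r + d * exp r / r) := by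
          rw [← mul_sum]; gcongr; exact sum_Icc_two_exp_neg_pow_mul_le hd hr v
      _ = _ := by ring
  rw [Icc_eq_cons_Ioc hv, sum_cons, ← Icc_add_one_left_eq_Ioc, one_add_one_eq_two]
  linarith

end TailSum

theorem poissonPMF_toMeasure (r : ℝ≥0) : (poissonPMF r).toMeasure = Po(r) :=
  Measure.ext_of_singleton fun n => by
    rw [PMF.toMeasure_apply_singleton _ _ (measurableSet_singleton n), poissonMeasure_singleton]
    rfl

theorem hasSum_choose_mul_poisson (r : ℝ≥0) (m : ℕ) :
    HasSum (fun n => (n.choose m : ℝ) * (exp (-r) * r ^ n / n !)) (r ^ m / m !) := by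
  have hlow : ∑ n ∈ range m, (n.choose m : ℝ) * (exp (-r) * r ^ n / n !) = 0 :=
    sum_eq_zero fun n hn => by simp [Nat.choose_eq_zero_of_lt (mem_range.mp hn)]
  have hshift : ∀ n, ((n + m).choose m : ℝ) * (exp (-r) * r ^ (n + m) / (n + m)!)
      = r ^ m / m ! * (exp (-r) * r ^ n / n !) := by
    intro n
    have h : ((n + m).choose m * n ! * m ! : ℝ) = (n + m)! := by
      exact_mod_cast Nat.add_choose_mul_factorial_mul_factorial n m
    have hc : ((n + m).choose m : ℝ) ≠ 0 := by
      exact_mod_cast (Nat.choose_pos (Nat.le_add_left m n)).ne'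
    rw [← h, pow_add]
    field_simp
  simpa [hlow, hshift] using
    (hasSum_nat_add_iff (f := fun n => (n.choose m : ℝ) * (exp (-r) * r ^ n / n !)) m).mp
      (by simpa [hshift] using (hasSum_one_poissonMeasure r).mul_left ((r : ℝ) ^ m / m !))

theorem poissonMeasure_real_Ici_le (r : ℝ≥0) (s : ℕ) : Po(r).real (Set.Ici s) ≤ r ^ s / s ! := by
  have hg := hasSum_choose_mul_poisson r s
  have hle : ∀ n, (exp (-r) * r ^ n / n !) • (Set.Ici s).indicator (1 : ℕ → ℝ) n
      ≤ (n.choose s : ℝ) * (exp (-r) * r ^ n / n !) := by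
    intro n
    by_cases hn : s ≤ n
    · simp only [Set.indicator_of_mem (Set.mem_Ici.mpr hn), Pi.one_apply, smul_eq_mul, mul_one]
      exact le_mul_of_one_le_left (by positivity) (by exact_mod_cast Nat.choose_pos hn)
    · simp only [Set.indicator_of_notMem (mt Set.mem_Ici.mp hn), smul_zero]
      positivity
  have hf : Summable fun n => (exp (-r) * r ^ n / n !) • (Set.Ici s).indicator (1 : ℕ → ℝ) n :=
    hg.summable.of_nonneg_of_le
      (fun n => smul_nonneg (by positivity) (Set.indicator_nonneg (fun _ _ => zero_le_one) n)) hle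
  rw [← integral_indicator_one measurableSet_Ici, integral_poissonMeasure]
  exact hasSum_le hle hf.hasSum hg

theorem poissonMeasure_real_Ici_le_exp (r : ℝ≥0) {s : ℕ} (hs : 1 ≤ s) :
    Po(r).real (Set.Ici s) ≤ exp (-exp (-r)) :=
  calc Po(r).real (Set.Ici s) ≤ Po(r).real {0}ᶜ :=
        measureReal_mono fun n hn => by simp at hn ⊢; omega
    _ = 1 - exp (-r) := by
        rw [probReal_compl_eq_one_sub (measurableSet_singleton 0), poissonMeasure_real_singleton]
        simp
    _ ≤ exp (-exp (-r)) := by linarith [add_one_le_exp (-exp (-r))]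

theorem exists_add_le_poissonMeasure_real_Ici {r : ℝ≥0} {f : ℕ → ℝ} {K : ℝ}
    (hf : ∀ v, 1 ≤ v → f v ≤ K * (r ^ v / v !)) (hK : 0 ≤ K) :
    ∃ C, ∀ w, f (w + C) ≤ Po(r).real (Set.Ici w) := by
  have hlim : Tendsto (fun n => K * (r ^ n / n ! : ℝ)) atTop (𝓝 0) := by
    simpa using (FloorSemiring.tendsto_pow_div_factorial_atTop (r : ℝ)).const_mul K
  obtain ⟨C, hC, hC1⟩ :=
    ((hlim.eventually (gt_mem_nhds (exp_pos (-r)))).and (eventually_ge_atTop 1)).exists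
  refine ⟨C, fun w => ?_⟩
  calc f (w + C) ≤ K * (r ^ (w + C) / (w + C)!) := hf _ (by omega)
    _ ≤ K * (r ^ C / C !) * (r ^ w / w !) := by
        rw [mul_assoc, add_comm w C]; gcongr; exact pow_add_div_factorial_add_le r.coe_nonneg C w
    _ ≤ exp (-r) * (r ^ w / w !) := by gcongr
    _ = Po(r).real {w} := by rw [poissonMeasure_real_singleton]; ring
    _ ≤ Po(r).real (Set.Ici w) := measureReal_mono (by simp)

theorem ProbabilityTheory.HasLaw.measureReal_preimage {Ω α : Type*} [MeasurableSpace Ω]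
    [MeasurableSpace α] {μ : Measure Ω} {ν : Measure α} {X : Ω → α} (hX : HasLaw X ν μ) {s : Set α}
    (hs : MeasurableSet s) : μ.real (X ⁻¹' s) = ν.real s :=
  hX.measureReal_eq hs

theorem measureReal_inter_biInter_preimage_eq_mul_prod {Ω α ι : Type*} [MeasurableSpace Ω]
    [MeasurableSpace α] {μ : Measure Ω} {X : Ω → α} {Y : ι → Ω → α}
    (h : iIndepFun (fun o : Option ι => o.elim X Y) μ) {A : Set α} {B : ι → Set α}
    (hA : MeasurableSet A) (hB : ∀ j, MeasurableSet (B j)) (S : Finset ι) :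
    μ.real (X ⁻¹' A ∩ ⋂ j ∈ S, Y j ⁻¹' B j) = μ.real (X ⁻¹' A) * ∏ j ∈ S, μ.real (Y j ⁻¹' B j) := by
  have key := h.measure_inter_preimage_eq_mul (insertNone S) (sets := fun o => o.elim A B)
    (fun o _ => by cases o <;> simp [hA, hB])
  have hset : ⋂ o ∈ insertNone S, (o.elim X Y) ⁻¹' (o.elim A B)
      = X ⁻¹' A ∩ ⋂ j ∈ S, Y j ⁻¹' B j := by
    ext ω; simp [mem_insertNone, Option.forall]
  rw [hset, prod_insertNone] at key
  simp [measureReal_def, key, ENNReal.toReal_mul, ENNReal.toReal_prod]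

theorem length_sub_le_countP_of_le_getElem {α : Type*} [Preorder α] [DecidableLE α]
    {L : List α} (hL : L.Pairwise (· ≤ ·)) {k : ℕ} (hk : k < L.length) {t : α} (ht : t ≤ L[k]) :
    L.length - k ≤ L.countP (fun a => t ≤ a) := by
  have hdrop : ∀ a ∈ L.drop k, t ≤ a := by
    have hpair := hL.sublist (L.drop_sublist k)
    rw [List.drop_eq_getElem_cons hk, List.pairwise_cons] at hpair
    rw [List.drop_eq_getElem_cons hk]
    rintro a (_ | ⟨_, ha⟩)
    · exact ht
    · exact ht.trans (hpair.1 a ha)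
  calc L.length - k = (L.drop k).countP (fun a => t ≤ a) := by
        rw [List.countP_eq_length.mpr (fun a ha => decide_eq_true (hdrop a ha)), List.length_drop]
    _ ≤ L.countP (fun a => t ≤ a) := (L.drop_sublist k).countP_le

theorem card_filter_range_eq_countP_sortedVals {Ω : Type*} (Y : ℕ → Ω → ℕ) (x : ℕ) (ω : Ω)
    (p : ℕ → Prop) [DecidablePred p] :
    #{j ∈ range x | p (Y j ω)} = (sortedVals Y x ω).countP (fun a => p a) := by
  rw [← Multiset.coe_countP, sortedVals, Multiset.sort_eq, ← Multiset.map_coe,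
    Multiset.countP_map, Multiset.coe_range]
  rfl

theorem exists_le_card_filter_of_le_Wstat {Ω : Type*} {X : Ω → ℕ} {Y : ℕ → Ω → ℕ} {ω : Ω}
    {v : ℕ} (hv : 1 ≤ v) (hW : (v : ℤ) ≤ Wstat X Y ω) :
    ∃ m ∈ Icc 1 (X ω), m ≤ #{j ∈ range (X ω) | v + 1 - m ≤ Y j ω} := by
  unfold Wstat at hW
  split_ifs at hW with hX
  case neg => omega
  obtain ⟨i, hi, hle⟩ := (le_sup'_iff _).mp (show (v : ℤ) - X ω ≤ _ by linarith)
  obtain ⟨hi1, hix⟩ := mem_Icc.mp hi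
  set L := sortedVals Y (X ω) ω
  have hlen : L.length = X ω := by simp [L, sortedVals]
  have hk : i - 1 < L.length := by omega
  rw [List.getD_eq_getElem L 0 hk] at hle
  refine ⟨X ω + 1 - i, mem_Icc.mpr ⟨by omega, by omega⟩, ?_⟩
  rw [card_filter_range_eq_countP_sortedVals]
  have ht : v + 1 - (X ω + 1 - i) ≤ L[i - 1] := by omega
  exact le_of_eq_of_le (by omega)
    (length_sub_le_countP_of_le_getElem (L := L) (Multiset.pairwise_sort _ _) hk ht)

theorem setOf_le_Wstat_subset {Ω : Type*} (X : Ω → ℕ) (Y : ℕ → Ω → ℕ) {v : ℕ} (hv : 1 ≤ v) :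
    {ω | (v : ℤ) ≤ Wstat X Y ω} ⊆ X ⁻¹' Set.Ici (v + 1) ∪
      ⋃ x ∈ range (v + 1), ⋃ m ∈ Icc 1 v, ⋃ S ∈ powersetCard m (range x),
        (X ⁻¹' {x} ∩ ⋂ j ∈ S, Y j ⁻¹' Set.Ici (v + 1 - m)) := by
  intro ω hω
  by_cases hX : v + 1 ≤ X ω
  · exact Or.inl hX
  obtain ⟨m, hm, hcard⟩ := exists_le_card_filter_of_le_Wstat hv hω
  obtain ⟨S, hS, rfl⟩ := exists_subset_card_eq hcard
  have hSv : #S ∈ Icc 1 v := by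
    obtain ⟨hm1, hmX⟩ := mem_Icc.mp hm
    exact mem_Icc.mpr ⟨hm1, by omega⟩
  have hSY : ∀ j ∈ S, v + 1 - #S ≤ Y j ω := fun j hj => (mem_filter.mp (hS hj)).2
  simp only [Set.mem_union, Set.mem_iUnion, Set.mem_inter_iff, Set.mem_iInter]
  exact Or.inr ⟨X ω, mem_range.mpr (by omega), #S, hSv, S,
    mem_powersetCard.mpr ⟨hS.trans (filter_subset _ _), rfl⟩, rfl, hSY⟩

theorem measureReal_setOf_le_Wstat_le {Ω : Type*} [MeasurableSpace Ω] {μ : Measure Ω}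
    [IsFiniteMeasure μ] {d : ℝ≥0} {ν : Measure ℕ} {X : Ω → ℕ} {Y : ℕ → Ω → ℕ}
    (hX : HasLaw X Po(d) μ)
    (hY : ∀ j, HasLaw (Y j) ν μ) (hindep : iIndepFun (fun o : Option ℕ => o.elim X Y) μ)
    {v : ℕ} (hv : 1 ≤ v) :
    μ.real {ω | (v : ℤ) ≤ Wstat X Y ω}
      ≤ Po(d).real (Set.Ici (v + 1))
        + ∑ m ∈ Icc 1 v, d ^ m / m ! * ν.real (Set.Ici (v + 1 - m)) ^ m := by
  have hcyl : ∀ x t (S : Finset ℕ), μ.real (X ⁻¹' {x} ∩ ⋂ j ∈ S, Y j ⁻¹' Set.Ici t)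
      = Po(d).real {x} * ν.real (Set.Ici t) ^ #S := by
    intro x t S
    rw [measureReal_inter_biInter_preimage_eq_mul_prod hindep (measurableSet_singleton x)
      (fun _ => measurableSet_Ici), hX.measureReal_preimage (measurableSet_singleton x),
      prod_congr rfl fun j _ => (hY j).measureReal_preimage measurableSet_Ici, prod_const]
  calc μ.real {ω | (v : ℤ) ≤ Wstat X Y ω}
      ≤ μ.real (X ⁻¹' Set.Ici (v + 1)) + ∑ x ∈ range (v + 1), ∑ m ∈ Icc 1 v,
          ∑ S ∈ powersetCard m (range x),
            μ.real (X ⁻¹' {x} ∩ ⋂ j ∈ S, Y j ⁻¹' Set.Ici (v + 1 - m)) := by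
        refine (measureReal_mono (setOf_le_Wstat_subset X Y hv)).trans
          ((measureReal_union_le _ _).trans (add_le_add le_rfl ?_))
        refine (measureReal_biUnion_finset_le _ _).trans (sum_le_sum fun x _ => ?_)
        refine (measureReal_biUnion_finset_le _ _).trans (sum_le_sum fun m _ => ?_)
        exact measureReal_biUnion_finset_le _ _
    _ = Po(d).real (Set.Ici (v + 1)) + ∑ m ∈ Icc 1 v,
          (∑ x ∈ range (v + 1), (x.choose m : ℝ) * Po(d).real {x}) *
            ν.real (Set.Ici (v + 1 - m)) ^ m := by
        rw [hX.measureReal_preimage measurableSet_Ici, sum_comm]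
        congr 1
        refine sum_congr rfl fun m _ => ?_
        rw [sum_mul]
        refine sum_congr rfl fun x _ => ?_
        simp_rw [hcyl]
        rw [sum_congr rfl fun S hS => by rw [(mem_powersetCard.mp hS).2], sum_const,
          card_powersetCard, card_range, nsmul_eq_mul]
        ring
    _ ≤ Po(d).real (Set.Ici (v + 1))
          + ∑ m ∈ Icc 1 v, d ^ m / m ! * ν.real (Set.Ici (v + 1 - m)) ^ m := by
        gcongr with m
        simp_rw [poissonMeasure_real_singleton]
        exact sum_le_hasSum _ (fun _ _ => by positivity) (hasSum_choose_mul_poisson d m)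

theorem W_stochastic_domination_general {Ω : Type*} [MeasurableSpace Ω]
    (μ : Measure Ω) [IsProbabilityMeasure μ] (d : ℝ≥0)
    (X : Ω → ℕ) (Y : ℕ → Ω → ℕ)
    (hmX : Measurable X) (hmY : ∀ j, Measurable (Y j))
    (hindep : iIndepFun
      (fun o : Option ℕ => o.elim X Y) μ)
    (hlawX : μ.map X = (poissonPMF d).toMeasure)
    (hlawY : ∀ j, μ.map (Y j) = (poissonPMF d).toMeasure) :
    ∃ C : ℕ, ∀ w : ℕ,
      μ {ω | ((w + C : ℕ) : ℤ) ≤ Wstat X Y ω}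
        ≤ (poissonPMF d).toMeasure {k : ℕ | w ≤ k} := by
  have hX : HasLaw X Po(d) μ := ⟨hmX.aemeasurable, hlawX.trans (poissonPMF_toMeasure d)⟩
  have hY (j : ℕ) : HasLaw (Y j) Po(d) μ :=
    ⟨(hmY j).aemeasurable, (hlawY j).trans (poissonPMF_toMeasure d)⟩
  have htail (v : ℕ) (hv : 1 ≤ v) :=
    (measureReal_setOf_le_Wstat_le hX hY hindep hv).trans
      (add_sum_pow_div_factorial_mul_pow_le d.coe_nonneg (exp_pos (-d))
        (fun _ => measureReal_nonneg) (poissonMeasure_real_Ici_le d)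
        (fun _ => poissonMeasure_real_Ici_le_exp d) hv)
  obtain ⟨C, hC⟩ := exists_add_le_poissonMeasure_real_Ici htail (by positivity)
  refine ⟨C, fun w => ?_⟩
  rw [poissonPMF_toMeasure]
  exact (ENNReal.toReal_le_toReal (measure_ne_top _ _) (measure_ne_top _ _)).mp (hC w)

/-- If `X ~ Poisson(d)` and, given `X = x`, `Y_1,…,Y_x` are i.i.d.
Poisson(d), then `W = X + max_{1≤i≤X}(Y_{(i)} − i)` is stochastically dominated by
`C + Poisson(d)` for some constant `C = C(d)`. -/
theorem W_stochastic_domination {Ω : Type*} [MeasurableSpace Ω]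
    (μ : Measure Ω) [IsProbabilityMeasure μ] (d : ℝ≥0) (hd : 0 < d)
    (X : Ω → ℕ) (Y : ℕ → Ω → ℕ)
    (hmX : Measurable X) (hmY : ∀ j, Measurable (Y j))
    (hindep : iIndepFun
      (fun o : Option ℕ => o.elim X Y) μ)
    (hlawX : μ.map X = (poissonPMF d).toMeasure)
    (hlawY : ∀ j, μ.map (Y j) = (poissonPMF d).toMeasure) :
    ∃ C : ℕ, ∀ w : ℕ,
      μ {ω | ((w + C : ℕ) : ℤ) ≤ Wstat X Y ω}
        ≤ (poissonPMF d).toMeasure {k : ℕ | w ≤ k} :=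
  W_stochastic_domination_general μ d X Y hmX hmY hindep hlawX hlawY
end
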